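/- arXiv:1804.03010 — 12 statements merged into one kernel-verified Lean document; each statement's English description precedes it below -/
import Mathlib

section
/- Let M be an infinite monoid such that M∖{1} is a subsemigroup of M (i.e., closed under multiplication). Then every generating set of the diagonal M-act M×M contains {1}×M, and consequently the diagonal M-act is not finitely generated. -/
/-- The axioms for a right action of a monoid `M` on a set `A`:
`act a 1 = a` and `act a (m * n) = act (act a m) n`. -/
def IsAct {M A : Type*} [Monoid M] (act : A → M → A) : Prop :=
  (∀ a, act a 1 = a) ∧ ∀ a m n, act a (m * n) = act (act a m) n

/-- `U ⊆ A` is a generating set for the act `(A, act)`: every element of `A`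
has the form `u m` with `u ∈ U`, `m ∈ M`. -/
def Generates {M A : Type*} (act : A → M → A) (U : Set A) : Prop :=
  ∀ a : A, ∃ u ∈ U, ∃ m : M, act u m = a

/-- An act is finitely generated if it has a finite generating set. -/
def ActFG {M A : Type*} (act : A → M → A) : Prop :=
  ∃ U : Set A, U.Finite ∧ Generates act U

/-- The free `M`-act on a set `X`: the set `X × M` with action `(x, m) n = (x, m n)`. -/
def FreeAct (M : Type*) [Monoid M] (X : Type*) : X × M → M → X × M :=
  fun p m => (p.1, p.2 * m)

/-- The congruence on the act `(A, act)` generated by a set `R ⊆ A × A`: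
the smallest equivalence relation containing `R` that is compatible with the action. -/
def CongGen {M A : Type*} (act : A → M → A) (R : Set (A × A)) (a b : A) : Prop :=
  ∀ r : A → A → Prop, Equivalence r →
    (∀ x y (m : M), r x y → r (act x m) (act y m)) →
    (∀ p ∈ R, r p.1 p.2) → r a b

/-- An `M`-act `(A, act)` is finitely presented if it is defined by a presentation
`⟨X | R⟩` with `X` and `R` finite, i.e. there is a surjective `M`-equivariant map
`π : F_X → A` whose kernel is the congruence on `F_X` generated by `R`. -/
def ActFP (M : Type*) [Monoid M] {A : Type*} (act : A → M → A) : Prop :=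
  ∃ (X : Type) (_ : Finite X) (R : Set ((X × M) × (X × M))), R.Finite ∧
    ∃ π : X × M → A, Function.Surjective π ∧
      (∀ p m, π (FreeAct M X p m) = act (π p) m) ∧
      ∀ w₁ w₂ : X × M, π w₁ = π w₂ ↔ CongGen (FreeAct M X) R w₁ w₂

/-- The diagonal `M`-act: `M × M` with action `(a, b) c = (a c, b c)`. -/
def DiagAct (M : Type*) [Monoid M] : M × M → M → M × M :=
  fun p c => (p.1 * c, p.2 * c)

/-- If `M` is an infinite monoid such that `M \ {1}` is closed under multiplication,
then every generating set of the diagonal `M`-act contains `{1} × M`, and hence the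
diagonal `M`-act is not finitely generated. -/
theorem stmt1 {M : Type*} [Monoid M] [Infinite M]
    (h : ∀ a b : M, a ≠ 1 → b ≠ 1 → a * b ≠ 1) :
    (∀ U : Set (M × M), Generates (DiagAct M) U → ∀ m : M, ((1 : M), m) ∈ U) ∧
      ¬ ActFG (DiagAct M) := by
  have key : ∀ U : Set (M × M), Generates (DiagAct M) U → ∀ m : M, ((1 : M), m) ∈ U := by
    intro U hU m
    obtain ⟨u, hu, c, hc⟩ := hU (1, m)
    have h1 : u.1 * c = 1 := congrArg Prod.fst hc
    have hc1 : c = 1 := by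
      by_contra hcne
      by_cases hu1 : u.1 = 1
      · exact hcne (by simpa [hu1] using h1)
      · exact h u.1 c hu1 hcne h1
    have : u = (1, m) := by
      have := hc
      simp only [DiagAct, hc1, mul_one] at this
      simpa [Prod.ext_iff] using this
    rwa [this] at hu
  refine ⟨key, ?_⟩
  rintro ⟨U, hfin, hgen⟩
  have hsub : Set.range (fun m : M => ((1 : M), m)) ⊆ U := by
    rintro _ ⟨m, rfl⟩; exact key U hgen m
  have : (Set.range (fun m : M => ((1 : M), m))).Finite := hfin.subset hsub
  have hinf : (Set.range (fun m : M => ((1 : M), m))).Infinite :=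
    Set.infinite_range_of_injective (fun a b hab => (Prod.ext_iff.mp hab).2)
  exact hinf this
end

section
/- Let M be a monoid and let M⁰ denote the monoid obtained from M by adjoining a new zero element 0 (so 0x=x0=0 for all x∈M⁰). If the diagonal M-act is generated by a set U×U with U⊆M, then the diagonal M⁰-act is generated by the set Z = ((U∪{0})×(U∪{0})) ∖ {(0,0)}. -/
/-!
An element `(x, y)` with `x, y ∈ M` is generated exactly as in the diagonal `M`-act. For `(x, 0)`,
write `x = u c` with `(u, u') ∈ U × U` generating `(x, x)`; then `(u, 0) c = (x, 0)`, and
symmetrically for `(0, y)`. Finally `(0, 0) = (u, 0) 0` for any `u ∈ U`, which exists because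
`(1, 1)` is generated.
-/

namespace WithZero

variable {M : Type*}

def pairsOrZero (U : Set M) : Set (WithZero M × WithZero M) :=
  (((↑) '' U ∪ {0}) ×ˢ ((↑) '' U ∪ {0})) \ {(0, 0)}

variable {U : Set M}

lemma coe_coe_mem_pairsOrZero {u v : M} (hu : u ∈ U) (hv : v ∈ U) :
    ((u : WithZero M), (v : WithZero M)) ∈ pairsOrZero U :=
  ⟨⟨Or.inl ⟨u, hu, rfl⟩, Or.inl ⟨v, hv, rfl⟩⟩, by simp⟩

lemma coe_zero_mem_pairsOrZero {u : M} (hu : u ∈ U) :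
    ((u : WithZero M), (0 : WithZero M)) ∈ pairsOrZero U :=
  ⟨⟨Or.inl ⟨u, hu, rfl⟩, Or.inr rfl⟩, by simp⟩

lemma zero_coe_mem_pairsOrZero {u : M} (hu : u ∈ U) :
    ((0 : WithZero M), (u : WithZero M)) ∈ pairsOrZero U :=
  ⟨⟨Or.inr rfl, Or.inl ⟨u, hu, rfl⟩⟩, by simp⟩

end WithZero

section DiagAct

variable {M : Type*} [Monoid M]

@[simp]
lemma diagAct_apply (p : M × M) (c : M) : DiagAct M p c = (p.1 * c, p.2 * c) := rfl

lemma exists_mul_eq_of_generates_diagAct {U : Set M} (h : Generates (DiagAct M) (U ×ˢ U))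
    (x : M) : ∃ u ∈ U, ∃ c, u * c = x := by
  obtain ⟨⟨u, _⟩, ⟨hu, _⟩, c, hc⟩ := h (x, x)
  exact ⟨u, hu, c, congrArg Prod.fst hc⟩

open WithZero in
lemma generates_diagAct_withZero {U : Set M} (h : Generates (DiagAct M) (U ×ˢ U)) :
    Generates (DiagAct (WithZero M)) (pairsOrZero U) := by
  rintro ⟨a, b⟩
  induction a using WithZero.recZeroCoe with
  | zero =>
    induction b using WithZero.recZeroCoe with
    | zero =>
      obtain ⟨u, hu, -⟩ := exists_mul_eq_of_generates_diagAct h 1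
      exact ⟨_, coe_zero_mem_pairsOrZero hu, 0, by simp⟩
    | coe y =>
      obtain ⟨u, hu, c, rfl⟩ := exists_mul_eq_of_generates_diagAct h y
      exact ⟨_, zero_coe_mem_pairsOrZero hu, c, by simp⟩
  | coe x =>
    induction b using WithZero.recZeroCoe with
    | zero =>
      obtain ⟨u, hu, c, rfl⟩ := exists_mul_eq_of_generates_diagAct h x
      exact ⟨_, coe_zero_mem_pairsOrZero hu, c, by simp⟩
    | coe y =>
      obtain ⟨⟨u, v⟩, ⟨hu, hv⟩, c, hc⟩ := h (x, y)
      obtain ⟨rfl, rfl⟩ := Prod.mk.inj hc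
      exact ⟨_, coe_coe_mem_pairsOrZero hu hv, c, by simp⟩

end DiagAct

/-- If the diagonal `M`-act is generated by a set `U × U` with `U ⊆ M`, then the
diagonal `M⁰`-act is generated by `((U ∪ {0}) × (U ∪ {0})) \ {(0, 0)}`,
where `M⁰ = WithZero M` is `M` with a zero adjoined. -/
theorem stmt2 {M : Type*} [Monoid M] (U : Set M)
    (h : Generates (DiagAct M) (U ×ˢ U)) :
    Generates (DiagAct (WithZero M))
      ((((fun m : M => (m : WithZero M)) '' U ∪ {0}) ×ˢ
          ((fun m : M => (m : WithZero M)) '' U ∪ {0})) \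
        {((0 : WithZero M), (0 : WithZero M))}) :=
  generates_diagAct_withZero h
end

section
/- Let M and N be monoids. The diagonal (M×N)-act is finitely generated if and only if both the diagonal M-act and the diagonal N-act are finitely generated. -/
/-- The diagonal `(M × N)`-act is finitely generated if and only if both the diagonal
`M`-act and the diagonal `N`-act are finitely generated. -/
theorem stmt3 {M N : Type*} [Monoid M] [Monoid N] :
    ActFG (DiagAct (M × N)) ↔ ActFG (DiagAct M) ∧ ActFG (DiagAct N) := by
  constructor
  · rintro ⟨U, hUf, hUg⟩
    constructor
    · refine ⟨(fun p : (M × N) × (M × N) => (p.1.1, p.2.1)) '' U, hUf.image _, ?_⟩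
      rintro ⟨a, b⟩
      obtain ⟨u, hu, ⟨m, n⟩, hm⟩ := hUg ((a, 1), (b, 1))
      refine ⟨(u.1.1, u.2.1), ⟨u, hu, rfl⟩, m, ?_⟩
      simp only [DiagAct, Prod.ext_iff, Prod.mk.injEq] at hm ⊢
      exact ⟨hm.1.1, hm.2.1⟩
    · refine ⟨(fun p : (M × N) × (M × N) => (p.1.2, p.2.2)) '' U, hUf.image _, ?_⟩
      rintro ⟨a, b⟩
      obtain ⟨u, hu, ⟨m, n⟩, hm⟩ := hUg ((1, a), (1, b))
      refine ⟨(u.1.2, u.2.2), ⟨u, hu, rfl⟩, n, ?_⟩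
      simp only [DiagAct, Prod.ext_iff, Prod.mk.injEq] at hm ⊢
      exact ⟨hm.1.2, hm.2.2⟩
  · rintro ⟨⟨U, hUf, hUg⟩, ⟨V, hVf, hVg⟩⟩
    refine ⟨(fun p : (M × M) × (N × N) => ((p.1.1, p.2.1), (p.1.2, p.2.2))) '' (U ×ˢ V),
      (hUf.prod hVf).image _, ?_⟩
    rintro ⟨⟨a, c⟩, ⟨b, d⟩⟩
    obtain ⟨u, hu, m, hm⟩ := hUg (a, b)
    obtain ⟨v, hv, n, hn⟩ := hVg (c, d)
    refine ⟨((u.1, v.1), (u.2, v.2)), ⟨(u, v), ⟨hu, hv⟩, rfl⟩, (m, n), ?_⟩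
    simp only [DiagAct, Prod.ext_iff, Prod.mk.injEq] at hm hn ⊢
    exact ⟨⟨hm.1, hn.1⟩, hm.2, hn.2⟩
end

section
/- Let M be a monoid, let N be a submonoid of M, and suppose that M∖N is a (two‑sided) ideal of M. If the diagonal M-act is finitely presented, then the diagonal N-act is finitely presented. -/
section CongGenLemmas
variable {M A : Type*} [Monoid M] {act : A → M → A} {R : Set (A × A)}

theorem congGen_refl (a : A) : CongGen act R a a := fun _ hr _ _ => hr.refl a

theorem congGen_symm {a b : A} (h : CongGen act R a b) : CongGen act R b a :=
  fun r hr hc hR => hr.symm (h r hr hc hR)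

theorem congGen_trans {a b c : A} (h1 : CongGen act R a b) (h2 : CongGen act R b c) :
    CongGen act R a c := fun r hr hc hR => hr.trans (h1 r hr hc hR) (h2 r hr hc hR)

theorem congGen_act {a b : A} (m : M) (h : CongGen act R a b) :
    CongGen act R (act a m) (act b m) := fun r hr hc hR => hc a b m (h r hr hc hR)

theorem congGen_of_mem {p : A × A} (hp : p ∈ R) : CongGen act R p.1 p.2 :=
  fun _ _ _ hR => hR p hp

end CongGenLemmas

section Restrict
variable {M : Type*} [Monoid M] (N : Submonoid M) {X : Type} (π : X × M → M × M)

/-- generators whose image lies in `N × N` -/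
def Px (x : X) : Prop := (π (x, 1)).1 ∈ N ∧ (π (x, 1)).2 ∈ N

/-- words of the free act lying over `N` -/
def condz (z : X × M) : Prop := Px N π z.1 ∧ z.2 ∈ N

/-- restriction of a word to the free `N`-act -/
def resz (z : X × M) (h : condz N π z) : {x : X // Px N π x} × ↥N :=
  (⟨z.1, h.1⟩, ⟨z.2, h.2⟩)

/-- restricted relation set -/
def Rres (R : Set ((X × M) × (X × M))) :
    Set (({x : X // Px N π x} × ↥N) × ({x : X // Px N π x} × ↥N)) :=
  {w | ∃ z ∈ R, ∃ h1 : condz N π z.1, ∃ h2 : condz N π z.2,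
    w = (resz N π z.1 h1, resz N π z.2 h2)}

/-- restricted projection map -/
def piRes (hc : ∀ z, condz N π z → (π z).1 ∈ N ∧ (π z).2 ∈ N) :
    {x : X // Px N π x} × ↥N → ↥N × ↥N :=
  fun w => (⟨(π (w.1.1, (w.2 : M))).1, (hc _ ⟨w.1.2, w.2.2⟩).1⟩,
            ⟨(π (w.1.1, (w.2 : M))).2, (hc _ ⟨w.1.2, w.2.2⟩).2⟩)

end Restrict

/-- Let `N` be a submonoid of `M` such that `M \ N` is a (two-sided) ideal of `M`.
If the diagonal `M`-act is finitely presented, then the diagonal `N`-act is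
finitely presented. -/
theorem stmt4 {M : Type*} [Monoid M] (N : Submonoid M)
    (hideal : ∀ x : M, x ∉ N → ∀ m : M, m * x ∉ N ∧ x * m ∉ N)
    (hfp : ActFP M (DiagAct M)) :
    ActFP ↥N (DiagAct ↥N) := by
  obtain ⟨X, hXfin, R, hRfin, π, hsurj, hequiv, hker⟩ := hfp
  haveI := hXfin
  classical
  have hN : ∀ a m : M, a * m ∈ N → a ∈ N ∧ m ∈ N := by
    intro a m h
    constructor
    · by_contra ha; exact (hideal a ha m).2 h
    · by_contra hm; exact (hideal m hm a).1 h
  have hπ1 : ∀ (x : X) (m : M), π (x, m) = DiagAct M (π (x, 1)) m := by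
    intro x m
    have := hequiv (x, 1) m
    simpa [FreeAct] using this
  have hcond : ∀ z : X × M, condz N π z ↔ ((π z).1 ∈ N ∧ (π z).2 ∈ N) := by
    rintro ⟨x, m⟩
    rw [hπ1 x m]
    show (Px N π x ∧ m ∈ N) ↔ _
    unfold Px
    simp only [DiagAct]
    constructor
    · rintro ⟨⟨h1, h2⟩, hm⟩; exact ⟨N.mul_mem h1 hm, N.mul_mem h2 hm⟩
    · rintro ⟨h1, h2⟩
      obtain ⟨ha, hm⟩ := hN _ _ h1
      exact ⟨⟨ha, (hN _ _ h2).1⟩, hm⟩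
  have hc : ∀ z, condz N π z → (π z).1 ∈ N ∧ (π z).2 ∈ N := fun z h => (hcond z).1 h
  -- a default element
  obtain ⟨z0, hz0⟩ := hsurj (1, 1)
  have hz0c : condz N π z0 := (hcond z0).2 (by rw [hz0]; exact ⟨N.one_mem, N.one_mem⟩)
  set w0 := resz N π z0 hz0c with hw0
  have hR'fin : (Rres N π R).Finite := by
    have hsub : Rres N π R ⊆ (fun z => if h : condz N π z.1 ∧ condz N π z.2 then
        (resz N π z.1 h.1, resz N π z.2 h.2) else (w0, w0)) '' R := by
      rintro w ⟨z, hz, h1, h2, rfl⟩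
      exact ⟨z, hz, by dsimp only; rw [dif_pos ⟨h1, h2⟩]⟩
    exact ((hRfin.image _).subset hsub)
  refine ⟨{x : X // Px N π x}, inferInstance, Rres N π R, hR'fin, piRes N π hc, ?_, ?_, ?_⟩
  · -- surjectivity
    rintro ⟨a, b⟩
    obtain ⟨z, hz⟩ := hsurj ((a : M), (b : M))
    have hcz : condz N π z := (hcond z).2 (by rw [hz]; exact ⟨a.2, b.2⟩)
    refine ⟨resz N π z hcz, ?_⟩
    apply Prod.ext <;> (apply Subtype.ext; simp [piRes, resz, hz])
  · -- equivariance
    rintro ⟨⟨x, hx⟩, n⟩ c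
    have e1 := hequiv (x, (n : M)) (c : M)
    simp only [FreeAct] at e1
    apply Prod.ext <;>
      (apply Subtype.ext; simp [piRes, resz, FreeAct, DiagAct, Submonoid.coe_mul, e1])
  · -- kernel
    intro w₁ w₂
    constructor
    · intro h
      have hπeq : π (w₁.1.1, (w₁.2 : M)) = π (w₂.1.1, (w₂.2 : M)) := by
        have h1 := congrArg (fun p : ↥N × ↥N => ((p.1 : M), (p.2 : M))) h
        simp only [piRes] at h1
        obtain ⟨e1, e2⟩ := Prod.mk.injEq .. ▸ h1
        exact Prod.ext e1 e2
      have hM := (hker _ _).mp hπeq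
      let r : X × M → X × M → Prop := fun z z' =>
        π z = π z' ∧ ∀ (h1 : condz N π z) (h2 : condz N π z'),
          CongGen (FreeAct ↥N {x : X // Px N π x}) (Rres N π R)
            (resz N π z h1) (resz N π z' h2)
      have hre : Equivalence r := by
        constructor
        · exact fun z => ⟨rfl, fun h1 h2 => congGen_refl _⟩
        · rintro z z' ⟨he, hcg⟩
          exact ⟨he.symm, fun h1 h2 => congGen_symm (hcg h2 h1)⟩
        · rintro z z' z'' ⟨he, hcg⟩ ⟨he', hcg'⟩
          refine ⟨he.trans he', fun h1 h2 => ?_⟩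
          have hmid : condz N π z' := (hcond z').2 (he ▸ (hcond z).1 h1)
          exact congGen_trans (hcg h1 hmid) (hcg' hmid h2)
      have hrc : ∀ z z' m, r z z' → r (FreeAct M X z m) (FreeAct M X z' m) := by
        rintro z z' m ⟨he, hcg⟩
        refine ⟨by rw [hequiv z m, hequiv z' m, he], ?_⟩
        intro h1 h2
        have hm : m ∈ N := (hN _ _ h1.2).2
        have hz : condz N π z := ⟨h1.1, (hN _ _ h1.2).1⟩
        have hz' : condz N π z' := ⟨h2.1, (hN _ _ h2.2).1⟩
        have hstep := congGen_act (act := FreeAct ↥N {x : X // Px N π x})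
          (⟨m, hm⟩ : ↥N) (hcg hz hz')
        exact hstep
      have hrR : ∀ p ∈ R, r p.1 p.2 := by
        rintro p hp
        refine ⟨(hker _ _).mpr (congGen_of_mem hp), fun h1 h2 => ?_⟩
        exact congGen_of_mem (act := FreeAct ↥N {x : X // Px N π x})
          (R := Rres N π R) (p := (resz N π p.1 h1, resz N π p.2 h2))
          ⟨p, hp, h1, h2, rfl⟩
      have hfin := hM r hre hrc hrR
      exact hfin.2 ⟨w₁.1.2, w₁.2.2⟩ ⟨w₂.1.2, w₂.2.2⟩
    · intro hcg
      have key : π (w₁.1.1, (w₁.2 : M)) = π (w₂.1.1, (w₂.2 : M)) := by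
        refine hcg (fun w w' => π (w.1.1, (w.2 : M)) = π (w'.1.1, (w'.2 : M))) ?_ ?_ ?_
        · exact ⟨fun _ => rfl, Eq.symm, Eq.trans⟩
        · rintro w w' c he
          show π (w.1.1, ((w.2 * c : ↥N) : M)) = π (w'.1.1, ((w'.2 * c : ↥N) : M))
          have e1 := hequiv (w.1.1, (w.2 : M)) (c : M)
          have e2 := hequiv (w'.1.1, (w'.2 : M)) (c : M)
          simp only [FreeAct] at e1 e2
          rw [Submonoid.coe_mul, e1, Submonoid.coe_mul, e2, he]
        · rintro p ⟨z, hz, h1, h2, rfl⟩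
          have hpe : π z.1 = π z.2 := (hker _ _).mpr (congGen_of_mem hz)
          simpa [resz] using hpe
      apply Prod.ext <;> (apply Subtype.ext; simp [piRes, key])
end

section
/- Let M be a monoid and let M⁰ denote the monoid obtained from M by adjoining a new zero element 0. Then the diagonal M-act is finitely presented if and only if the diagonal M⁰-act is finitely presented. -/
/-!
If `⟨X | R⟩` presents the diagonal `M`-act, the diagonal `M⁰`-act is presented on the generators
`X ⊔ {e₁, e₂}`, with `e₁ ↦ (1, 0)` and `e₂ ↦ (0, 1)`, by the relations `R` together with all
relations `y 0 = y' 0` between generators: the elements with both coordinates nonzero form a copy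
of `M × M` reached only from `X` with coefficients in `M`, while `(a, 0)`, `(0, b)` and `(0, 0)`
with `a, b ∈ M` are reached only as `e₁ a`, `e₂ b` and `y 0`.

Conversely, given a presentation `⟨X | R⟩` of the diagonal `M⁰`-act, keep the generators whose
image has both coordinates nonzero and the relations between words in them with coefficients in
`M`. These words form exactly the preimage of `M × M`, which is a union of kernel classes, and,
since `M⁰` has no zero divisors, `w s` is such a word only if `w` is one and `s ∈ M`. Hence a
derivation in the congruence generated by `R` between two such words never leaves them, so it
is a derivation over `M`.
-/

open Function Set

namespace CongGen

variable {M A : Type*} {act : A → M → A} {R : Set (A × A)}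

theorem refl (a : A) : CongGen act R a a := fun _ hr _ _ => hr.refl a

theorem symm {a b : A} (h : CongGen act R a b) : CongGen act R b a :=
  fun r hr hact hR => hr.symm (h r hr hact hR)

theorem trans {a b c : A} (h₁ : CongGen act R a b) (h₂ : CongGen act R b c) :
    CongGen act R a c :=
  fun r hr hact hR => hr.trans (h₁ r hr hact hR) (h₂ r hr hact hR)

theorem of_mem {a b : A} (h : (a, b) ∈ R) : CongGen act R a b := fun _ _ _ hR => hR _ h

theorem compatible {a b : A} (h : CongGen act R a b) (m : M) :
    CongGen act R (act a m) (act b m) :=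
  fun r hr hact hR => hact a b m (h r hr hact hR)

theorem eq_of_equivariant {B : Type*} {act' : B → M → B} (π : A → B)
    (hπ : ∀ a m, π (act a m) = act' (π a) m) (hR : ∀ p ∈ R, π p.1 = π p.2) {a b : A}
    (h : CongGen act R a b) : π a = π b :=
  h (fun a b => π a = π b) ⟨fun _ => rfl, Eq.symm, Eq.trans⟩
    (fun a b m hab => by rw [hπ, hπ, hab]) hR

theorem map {N B : Type*} {act' : B → N → B} {S : Set (B × B)} (f : A → B)
    (φ : M → N) (hf : ∀ a m, f (act a m) = act' (f a) (φ m))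
    (hRS : ∀ p ∈ R, CongGen act' S (f p.1) (f p.2)) {a b : A} (h : CongGen act R a b) :
    CongGen act' S (f a) (f b) :=
  h (fun a b => CongGen act' S (f a) (f b)) ⟨fun _ => refl _, symm, trans⟩
    (fun a b m hab => by rw [hf, hf]; exact hab.compatible _) hRS

theorem comap {N B : Type*} {act' : B → N → B} (ι : B → A) (φ : N → M)
    (hι : Injective ι) (hequiv : ∀ b n, ι (act' b n) = act (ι b) (φ n))
    (hlift : ∀ a m, act a m ∈ range ι → ∃ b n, ι b = a ∧ φ n = m)
    (hR : ∀ p ∈ R, p.1 ∈ range ι ↔ p.2 ∈ range ι) {b₁ b₂ : B}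
    (h : CongGen act R (ι b₁) (ι b₂)) : CongGen act' (Prod.map ι ι ⁻¹' R) b₁ b₂ := by
  set S := Prod.map ι ι ⁻¹' R
  let r : A → A → Prop := fun a a' =>
    (a ∈ range ι ↔ a' ∈ range ι) ∧ ∀ b b', ι b = a → ι b' = a' → CongGen act' S b b'
  have hr_act : ∀ a a' m, r a a' → act a m ∈ range ι →
      ∃ b b' n, ι b = a ∧ ι b' = a' ∧ φ n = m := by
    rintro a a' m ⟨hmem, -⟩ ham
    obtain ⟨b, n, rfl, rfl⟩ := hlift a m ham
    obtain ⟨b', rfl⟩ := hmem.1 ⟨b, rfl⟩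
    exact ⟨b, b', n, rfl, rfl, rfl⟩
  have hr : Equivalence r := by
    refine ⟨fun a => ⟨Iff.rfl, fun b b' hb hb' => hι (hb.trans hb'.symm) ▸ refl _⟩,
      fun ⟨hmem, hS⟩ => ⟨hmem.symm, fun b b' hb hb' => (hS b' b hb' hb).symm⟩, ?_⟩
    rintro a a' a'' ⟨hmem, hS⟩ ⟨hmem', hS'⟩
    refine ⟨hmem.trans hmem', fun b b'' hb hb'' => ?_⟩
    obtain ⟨b', hb'⟩ := hmem.1 ⟨b, hb⟩
    exact (hS b b' hb hb').trans (hS' b' b'' hb' hb'')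
  refine (h r hr (fun a a' m haa' => ⟨⟨fun ham => ?_, fun ham => ?_⟩, ?_⟩) ?_).2 b₁ b₂ rfl rfl
  · obtain ⟨b, b', n, -, rfl, rfl⟩ := hr_act a a' m haa' ham
    exact ⟨act' b' n, hequiv b' n⟩
  · obtain ⟨b', b, n, -, rfl, rfl⟩ := hr_act a' a m (hr.symm haa') ham
    exact ⟨act' b n, hequiv b n⟩
  · rintro c c' hc hc'
    obtain ⟨b, b', n, rfl, rfl, rfl⟩ := hr_act a a' m haa' ⟨c, hc⟩
    rw [← hequiv] at hc hc'
    rw [hι hc, hι hc']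
    exact (haa'.2 b b' rfl rfl).compatible n
  · rintro p hp
    exact ⟨hR p hp, fun b b' hb hb' => of_mem (show (ι b, ι b') ∈ R by rw [hb, hb']; exact hp)⟩

end CongGen

theorem ActFP.of_relations {M A : Type*} [Monoid M] {act : A → M → A} (X : Type) [Finite X]
    (R : Set ((X × M) × (X × M))) (hR : R.Finite) (π : X × M → A) (hsurj : Surjective π)
    (hπ : ∀ p m, π (FreeAct M X p m) = act (π p) m) (hRπ : ∀ p ∈ R, π p.1 = π p.2)
    (hker : ∀ w₁ w₂, π w₁ = π w₂ → CongGen (FreeAct M X) R w₁ w₂) : ActFP M act :=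
  ⟨X, inferInstance, R, hR, π, hsurj, hπ,
    fun w₁ w₂ => ⟨hker w₁ w₂, CongGen.eq_of_equivariant π hπ hRπ⟩⟩

section WithZero

variable {M X Y : Type*}

def coeFree (f : Y → X) : Y × M → X × WithZero M := fun w => (f w.1, w.2)

theorem coeFree_injective {f : Y → X} (hf : Injective f) : Injective (coeFree (M := M) f) :=
  hf.prodMap WithZero.coe_injective

theorem exists_coeFree_of_mul_mem_range [Mul M] (f : Y → X) {x : X} {c n : WithZero M}
    (h : (x, c * n) ∈ range (coeFree (M := M) f)) :
    ∃ b : Y × M, ∃ n' : M, coeFree f b = (x, c) ∧ ↑n' = n := by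
  obtain ⟨⟨y, m⟩, h⟩ := h
  simp only [coeFree, Prod.mk.injEq] at h
  obtain ⟨rfl, hm⟩ := h
  have hcn : c * n ≠ 0 := hm ▸ WithZero.coe_ne_zero
  obtain ⟨c', rfl⟩ := WithZero.ne_zero_iff_exists.1 (left_ne_zero_of_mul hcn)
  obtain ⟨n', rfl⟩ := WithZero.ne_zero_iff_exists.1 (right_ne_zero_of_mul hcn)
  exact ⟨(y, c'), n', rfl, rfl⟩

theorem coeFree_freeAct [Monoid M] (f : Y → X) (w : Y × M) (m : M) :
    coeFree f (FreeAct M Y w m) = FreeAct (WithZero M) X (coeFree f w) m := by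
  simp [coeFree, FreeAct]

def coeProd (p : M × M) : WithZero M × WithZero M := (p.1, p.2)

theorem coeProd_injective : Injective (coeProd (M := M)) := by
  rintro ⟨a, b⟩ ⟨c, d⟩ h
  simpa [coeProd] using h

theorem mem_range_coeProd {p : WithZero M × WithZero M} :
    p ∈ range coeProd ↔ p.1 ≠ 0 ∧ p.2 ≠ 0 := by
  simp only [WithZero.ne_zero_iff_exists, mem_range, coeProd, Prod.ext_iff, Prod.exists]
  exact ⟨fun ⟨a, b, ha, hb⟩ => ⟨⟨a, ha⟩, b, hb⟩,
    fun ⟨⟨a, ha⟩, b, hb⟩ => ⟨a, b, ha, hb⟩⟩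

end WithZero

section Diagonal

variable {M X : Type*} [Monoid M]

def diagLift (g : X → M × M) : X × M → M × M := fun w => DiagAct M (g w.1) w.2

theorem diagLift_freeAct (g : X → M × M) (w : X × M) (m : M) :
    diagLift g (FreeAct M X w m) = DiagAct M (diagLift g w) m := by
  simp [diagLift, DiagAct, FreeAct, mul_assoc]

theorem exists_diagLift_eq {π : X × M → M × M}
    (hπ : ∀ p m, π (FreeAct M X p m) = DiagAct M (π p) m) :
    ∃ g : X → M × M, diagLift g = π :=
  ⟨fun x => π (x, 1),
    funext fun ⟨x, c⟩ => by simpa [FreeAct, diagLift] using (hπ (x, 1) c).symm⟩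

theorem coeProd_diagAct (p : M × M) (m : M) :
    coeProd (DiagAct M p m) = DiagAct (WithZero M) (coeProd p) m := by
  simp [coeProd, DiagAct]

theorem diagAct_mem_range_coeProd {p : WithZero M × WithZero M} {c : WithZero M} :
    DiagAct (WithZero M) p c ∈ range coeProd ↔ p ∈ range coeProd ∧ c ≠ 0 := by
  simp only [mem_range_coeProd, DiagAct, ne_eq, mul_eq_zero]
  tauto

end Diagonal

section WithZeroGens

variable {M X : Type*}

def withZeroRels (R : Set ((X × M) × (X × M))) :
    Set (((X ⊕ Bool) × WithZero M) × ((X ⊕ Bool) × WithZero M)) :=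
  Prod.map (coeFree .inl) (coeFree .inl) '' R ∪
    range fun y : (X ⊕ Bool) × (X ⊕ Bool) => ((y.1, 0), (y.2, 0))

theorem withZeroRels_finite [Finite X] {R : Set ((X × M) × (X × M))} (hR : R.Finite) :
    (withZeroRels R).Finite :=
  (hR.image _).union (finite_range _)

variable [Monoid M] {g : X → M × M}

def withZeroGens (g : X → M × M) : X ⊕ Bool → WithZero M × WithZero M :=
  Sum.elim (fun x => coeProd (g x)) (fun b => if b then (1, 0) else (0, 1))

theorem diagLift_withZeroGens_inl (x : X) (m : M) :
    diagLift (withZeroGens g) (.inl x, m) = coeProd (diagLift g (x, m)) :=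
  (coeProd_diagAct (g x) m).symm

theorem diagLift_withZeroGens_true (c : WithZero M) :
    diagLift (withZeroGens g) (.inr true, c) = (c, 0) := by
  simp [diagLift, withZeroGens, DiagAct]

theorem diagLift_withZeroGens_false (c : WithZero M) :
    diagLift (withZeroGens g) (.inr false, c) = (0, c) := by
  simp [diagLift, withZeroGens, DiagAct]

theorem diagLift_withZeroGens_eq_zero_iff (y : X ⊕ Bool) (c : WithZero M) :
    diagLift (withZeroGens g) (y, c) = (0, 0) ↔ c = 0 := by
  rcases y with x | _ | _ <;> simp [diagLift, withZeroGens, DiagAct, coeProd]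

theorem diagLift_withZeroGens_surjective (hg : Surjective (diagLift g)) :
    Surjective (diagLift (withZeroGens g)) := by
  rintro ⟨a, b⟩
  by_cases ha : a = 0
  · exact ⟨(.inr false, b), by rw [diagLift_withZeroGens_false, ha]⟩
  by_cases hb : b = 0
  · exact ⟨(.inr true, a), by rw [diagLift_withZeroGens_true, hb]⟩
  obtain ⟨p, hp⟩ := (mem_range_coeProd (p := (a, b))).2 ⟨ha, hb⟩
  obtain ⟨⟨x, m⟩, rfl⟩ := hg p
  exact ⟨(.inl x, m), by rw [diagLift_withZeroGens_inl, hp]⟩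

theorem diagLift_withZeroGens_eq_of_mem_withZeroRels {R : Set ((X × M) × (X × M))}
    (hR : ∀ p ∈ R, diagLift g p.1 = diagLift g p.2) :
    ∀ p ∈ withZeroRels R, diagLift (withZeroGens g) p.1 = diagLift (withZeroGens g) p.2 := by
  rintro _ (⟨⟨w₁, w₂⟩, hw, rfl⟩ | ⟨⟨y₁, y₂⟩, rfl⟩)
  · exact (diagLift_withZeroGens_inl _ _).trans
      ((hR _ hw).symm ▸ (diagLift_withZeroGens_inl _ _).symm)
  · exact ((diagLift_withZeroGens_eq_zero_iff y₁ 0).2 rfl).trans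
      ((diagLift_withZeroGens_eq_zero_iff y₂ 0).2 rfl).symm

theorem congGen_withZeroRels_of_diagLift_eq {R : Set ((X × M) × (X × M))}
    (hker : ∀ w₁ w₂, diagLift g w₁ = diagLift g w₂ → CongGen (FreeAct M X) R w₁ w₂)
    {w₁ w₂ : (X ⊕ Bool) × WithZero M}
    (h : diagLift (withZeroGens g) w₁ = diagLift (withZeroGens g) w₂) :
    CongGen (FreeAct (WithZero M) (X ⊕ Bool)) (withZeroRels R) w₁ w₂ := by
  obtain ⟨y₁, c₁⟩ := w₁
  obtain ⟨y₂, c₂⟩ := w₂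
  have hzero : c₁ = 0 ↔ c₂ = 0 := by
    rw [← diagLift_withZeroGens_eq_zero_iff y₁, ← diagLift_withZeroGens_eq_zero_iff y₂, h]
  by_cases hc₁ : c₁ = 0
  · obtain rfl := hzero.1 hc₁
    subst hc₁
    exact .of_mem (.inr ⟨(y₁, y₂), rfl⟩)
  obtain ⟨m₁, rfl⟩ := WithZero.ne_zero_iff_exists.1 hc₁
  obtain ⟨m₂, rfl⟩ := WithZero.ne_zero_iff_exists.1 (hzero.not.1 hc₁)
  rcases y₁ with x₁ | _ | _ <;> rcases y₂ with x₂ | _ | _ <;>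
    simp only [diagLift_withZeroGens_inl, diagLift_withZeroGens_true,
      diagLift_withZeroGens_false, coeProd, Prod.mk.injEq, WithZero.coe_ne_zero,
      WithZero.zero_ne_coe, WithZero.coe_inj, and_false, false_and, and_true, true_and,
      ← Prod.ext_iff] at h
  · exact CongGen.map (coeFree (Sum.inl : X → X ⊕ Bool)) (↑) (coeFree_freeAct _)
      (fun p hp => .of_mem (.inl ⟨p, hp, rfl⟩)) (hker _ _ h)
  all_goals exact h ▸ .refl _

end WithZeroGens

section UnzeroGens

variable {M X : Type*} [Monoid M] (g : X → WithZero M × WithZero M)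

noncomputable def unzeroGens : {x // g x ∈ range coeProd} → M × M := fun x => x.2.choose

theorem diagLift_coeFree_val (w : {x // g x ∈ range coeProd} × M) :
    diagLift g (coeFree Subtype.val w) = coeProd (diagLift (unzeroGens g) w) := by
  obtain ⟨x, m⟩ := w
  rw [diagLift, diagLift, coeProd_diagAct, unzeroGens, x.2.choose_spec]
  rfl

theorem mem_range_coeFree_val_iff (w : X × WithZero M) :
    w ∈ range (coeFree (M := M) (Subtype.val : {x // g x ∈ range coeProd} → X)) ↔
      diagLift g w ∈ range coeProd := by
  obtain ⟨x, c⟩ := w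
  rw [diagLift, diagAct_mem_range_coeProd, WithZero.ne_zero_iff_exists]
  constructor
  · rintro ⟨⟨⟨x', hx⟩, m⟩, h⟩
    simp only [coeFree, Prod.mk.injEq] at h
    obtain ⟨rfl, rfl⟩ := h
    exact ⟨hx, m, rfl⟩
  · rintro ⟨hx, m, rfl⟩
    exact ⟨(⟨x, hx⟩, m), rfl⟩

end UnzeroGens

theorem ActFP.withZero_diagAct {M : Type*} [Monoid M] (h : ActFP M (DiagAct M)) :
    ActFP (WithZero M) (DiagAct (WithZero M)) := by
  obtain ⟨X, _, R, hR, π, hπ_surj, hπ, hπ_ker⟩ := h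
  obtain ⟨g, rfl⟩ := exists_diagLift_eq hπ
  exact ActFP.of_relations (X ⊕ Bool) (withZeroRels R) (withZeroRels_finite hR)
    (diagLift (withZeroGens g)) (diagLift_withZeroGens_surjective hπ_surj) (diagLift_freeAct _)
    (diagLift_withZeroGens_eq_of_mem_withZeroRels fun p hp => (hπ_ker _ _).2 (.of_mem hp))
    (fun _ _ => congGen_withZeroRels_of_diagLift_eq fun _ _ => (hπ_ker _ _).1)

theorem ActFP.diagAct_of_withZero {M : Type*} [Monoid M]
    (h : ActFP (WithZero M) (DiagAct (WithZero M))) : ActFP M (DiagAct M) := by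
  obtain ⟨X, _, R, hR, π, hπ_surj, hπ, hπ_ker⟩ := h
  obtain ⟨g, rfl⟩ := exists_diagLift_eq hπ
  let ι := coeFree (M := M) (Subtype.val : {x // g x ∈ range coeProd} → X)
  have hι_inj : Injective ι := coeFree_injective Subtype.val_injective
  refine ActFP.of_relations _ (Prod.map ι ι ⁻¹' R)
    (hR.preimage (hι_inj.prodMap hι_inj).injOn) (diagLift (unzeroGens g)) ?_
    (diagLift_freeAct _) ?_ ?_
  · intro p
    obtain ⟨w, hw⟩ := hπ_surj (coeProd p)
    obtain ⟨w', rfl⟩ := (mem_range_coeFree_val_iff g w).2 ⟨p, hw.symm⟩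
    exact ⟨w', coeProd_injective ((diagLift_coeFree_val g w').symm.trans hw)⟩
  · rintro ⟨w₁, w₂⟩ hw
    apply coeProd_injective
    rw [← diagLift_coeFree_val, ← diagLift_coeFree_val]
    exact (hπ_ker _ _).2 (.of_mem hw)
  · intro w₁ w₂ hw
    refine CongGen.comap ι (↑) hι_inj (coeFree_freeAct _)
      (fun _ _ h => exists_coeFree_of_mul_mem_range _ h) (fun p hp => ?_)
      ((hπ_ker _ _).1 (by rw [diagLift_coeFree_val, diagLift_coeFree_val, hw]))
    rw [mem_range_coeFree_val_iff, mem_range_coeFree_val_iff, (hπ_ker _ _).2 (.of_mem hp)]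

/-- The diagonal `M`-act is finitely presented if and only if the diagonal `M⁰`-act
is finitely presented, where `M⁰ = WithZero M` is `M` with a zero adjoined. -/
theorem stmt5 {M : Type*} [Monoid M] :
    ActFP M (DiagAct M) ↔ ActFP (WithZero M) (DiagAct (WithZero M)) :=
  ⟨ActFP.withZero_diagAct, ActFP.diagAct_of_withZero⟩
end

section
/- Let M be a monoid, let A be a right M-act disjoint from M, and let N = 𝒰(M,A) be the monoid on the set M∪A with multiplication x∘y = xy if x,y∈M; x∘y = x·y (the action of y on x) if x∈A, y∈M; and x∘y = y if y∈A. Then the diagonal N-act is finitely generated if and only if both the diagonal M-act and the M-act A are finitely generated. -/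
/-- The multiplication of the monoid `𝒰(M, A)` on `M ⊕ A` (the disjoint union of `M`
and `A`): `x ∘ y = x y` for `x, y ∈ M`; `x ∘ y = x · y` for `x ∈ A`, `y ∈ M`;
`x ∘ y = y` for `y ∈ A`. -/
def umul {M A : Type*} [Monoid M] (act : A → M → A) : M ⊕ A → M ⊕ A → M ⊕ A
  | Sum.inl x, Sum.inl y => Sum.inl (x * y)
  | Sum.inr a, Sum.inl y => Sum.inr (act a y)
  | Sum.inl _, Sum.inr b => Sum.inr b
  | Sum.inr _, Sum.inr b => Sum.inr b

/-- For `N = 𝒰(M, A)`, the diagonal `N`-act is finitely generated if and only if both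
the diagonal `M`-act and the `M`-act `A` are finitely generated. -/
theorem stmt7 {M A : Type*} [Monoid M] [Nonempty A] (act : A → M → A)
    (hact : IsAct act) :
    ActFG (fun (p : (M ⊕ A) × (M ⊕ A)) (c : M ⊕ A) => (umul act p.1 c, umul act p.2 c)) ↔
      ActFG (DiagAct M) ∧ ActFG act := by

  obtain ⟨hone, hcomp⟩ := hact
  constructor
  · rintro ⟨W, hWfin, hWgen⟩
    constructor
    · refine ⟨(fun p : M × M => ((Sum.inl p.1 : M ⊕ A), (Sum.inl p.2 : M ⊕ A))) ⁻¹' W,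
        hWfin.preimage ?_, ?_⟩
      · intro p _ q _ h
        simpa [Prod.ext_iff] using h
      · intro p
        obtain ⟨u, hu, c, hc⟩ := hWgen (Sum.inl p.1, Sum.inl p.2)
        obtain ⟨u1 | a1, u2 | a2⟩ := u <;> rcases c with c | b <;>
          simp [umul, Prod.ext_iff] at hc
        exact ⟨(u1, u2), hu, c, by simp [DiagAct, Prod.ext_iff, hc.1, hc.2]⟩
    · refine ⟨Sum.inr ⁻¹' (Prod.snd '' W),
        (hWfin.image _).preimage Sum.inr_injective.injOn, ?_⟩
      intro a
      obtain ⟨⟨w1, w2⟩, hw, c, hc⟩ := hWgen (Sum.inl 1, Sum.inr a)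
      rcases c with c | b
      · rcases w2 with m2 | a2
        · simp [umul, Prod.ext_iff] at hc
        · rcases w1 with m1 | a1
          · have h2 : act a2 c = a := by
              have := congrArg Prod.snd hc
              simpa [umul] using this
            exact ⟨a2, ⟨(Sum.inl m1, Sum.inr a2), hw, rfl⟩, c, h2⟩
          · have := congrArg Prod.fst hc
            simp [umul] at this
      · rcases w1 with m1 | a1 <;>
          · have := congrArg Prod.fst hc
            simp [umul] at this
  · rintro ⟨⟨U, hUfin, hUgen⟩, ⟨V, hVfin, hVgen⟩⟩
    refine ⟨
      (fun p : M × M => ((Sum.inl p.1 : M ⊕ A), (Sum.inl p.2 : M ⊕ A))) '' U ∪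
      (fun q : (M × M) × A => ((Sum.inl q.1.1 : M ⊕ A), (Sum.inr (act q.2 q.1.2) : M ⊕ A))) '' (U ×ˢ V) ∪
      (fun q : (M × M) × A => ((Sum.inr (act q.2 q.1.1) : M ⊕ A), (Sum.inl q.1.2 : M ⊕ A))) '' (U ×ˢ V) ∪
      (fun q : (M × M) × (A × A) => ((Sum.inr (act q.2.1 q.1.1) : M ⊕ A), (Sum.inr (act q.2.2 q.1.2) : M ⊕ A))) '' (U ×ˢ (V ×ˢ V)),
      ?_, ?_⟩
    · exact (((hUfin.image _).union ((hUfin.prod hVfin).image _)).union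
        ((hUfin.prod hVfin).image _)).union ((hUfin.prod (hVfin.prod hVfin)).image _)
    · rintro ⟨x | a, y | b⟩
      · obtain ⟨⟨u1, u2⟩, hu, c, hc⟩ := hUgen (x, y)
        simp [DiagAct, Prod.ext_iff] at hc
        refine ⟨(Sum.inl u1, Sum.inl u2), ?_, Sum.inl c, ?_⟩
        · exact Or.inl (Or.inl (Or.inl ⟨(u1, u2), hu, rfl⟩))
        · simp [umul, Prod.ext_iff, hc.1, hc.2]
      · obtain ⟨v, hv, k, hk⟩ := hVgen b
        obtain ⟨⟨u1, u2⟩, hu, c, hc⟩ := hUgen (x, k)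
        simp [DiagAct, Prod.ext_iff] at hc
        refine ⟨(Sum.inl u1, Sum.inr (act v u2)), ?_, Sum.inl c, ?_⟩
        · exact Or.inl (Or.inl (Or.inr ⟨((u1, u2), v), ⟨hu, hv⟩, rfl⟩))
        · simp [umul, Prod.ext_iff, hc.1, ← hcomp, hc.2, hk]
      · obtain ⟨v, hv, k, hk⟩ := hVgen a
        obtain ⟨⟨u1, u2⟩, hu, c, hc⟩ := hUgen (k, y)
        simp [DiagAct, Prod.ext_iff] at hc
        refine ⟨(Sum.inr (act v u1), Sum.inl u2), ?_, Sum.inl c, ?_⟩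
        · exact Or.inl (Or.inr ⟨((u1, u2), v), ⟨hu, hv⟩, rfl⟩)
        · simp [umul, Prod.ext_iff, hc.2, ← hcomp, hc.1, hk]
      · obtain ⟨v, hv, k, hk⟩ := hVgen a
        obtain ⟨w, hw, l, hl⟩ := hVgen b
        obtain ⟨⟨u1, u2⟩, hu, c, hc⟩ := hUgen (k, l)
        simp [DiagAct, Prod.ext_iff] at hc
        refine ⟨(Sum.inr (act v u1), Sum.inr (act w u2)), ?_, Sum.inl c, ?_⟩
        · exact Or.inr ⟨((u1, u2), (v, w)), ⟨hu, hv, hw⟩, rfl⟩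
        · simp [umul, Prod.ext_iff, ← hcomp, hc.1, hc.2, hk, hl]
end

section
/- Let M be a monoid and suppose the diagonal M-act is generated by a set of the form U×V where U,V⊆M. Let A and B be right M-acts generated by sets X and Y respectively. Then the direct product M-act A×B is generated by the set XU×YV, where XU = {xu : x∈X, u∈U} and YV = {yv : y∈Y, v∈V}. -/
/-- Suppose the diagonal `M`-act is generated by a set `U × V` with `U, V ⊆ M`, and let
`A`, `B` be `M`-acts generated by `X`, `Y` respectively. Then the direct product `M`-act
`A × B` is generated by `XU × YV`, where `XU = {x u : x ∈ X, u ∈ U}` and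
`YV = {y v : y ∈ Y, v ∈ V}`. -/
theorem stmt12 {M : Type*} [Monoid M] {A B : Type*}
    (actA : A → M → A) (actB : B → M → B) (hA : IsAct actA) (hB : IsAct actB)
    (U V : Set M) (hUV : Generates (DiagAct M) (U ×ˢ V))
    (X : Set A) (Y : Set B) (hX : Generates actA X) (hY : Generates actB Y) :
    Generates (fun (p : A × B) (m : M) => (actA p.1 m, actB p.2 m))
      ((Set.image2 actA X U) ×ˢ (Set.image2 actB Y V)) := by
  rintro ⟨a, b⟩
  obtain ⟨x, hx, s, rfl⟩ := hX a
  obtain ⟨y, hy, t, rfl⟩ := hY b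
  obtain ⟨⟨u, v⟩, ⟨hu, hv⟩, c, hc⟩ := hUV (s, t)
  simp only [DiagAct, Prod.mk.injEq] at hc
  refine ⟨(actA x u, actB y v), ⟨⟨x, hx, u, hu, rfl⟩, ⟨y, hy, v, hv, rfl⟩⟩, c, ?_⟩
  simp only [Prod.mk.injEq]
  rw [← hA.2, ← hB.2, hc.1, hc.2]
  exact ⟨rfl, rfl⟩
end

section
/- Let M be a monoid. Then M preserves finite generation in direct products (i.e., for any two right M-acts A and B, the direct product A×B is finitely generated if and only if both A and B are finitely generated) if and only if the diagonal M-act is finitely generated. -/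
universe u

/-- A monoid `M` preserves finite generation in direct products (for any two `M`-acts
`A` and `B`, the direct product `A × B` is finitely generated iff both `A` and `B` are)
if and only if the diagonal `M`-act is finitely generated. -/
theorem stmt13 {M : Type u} [Monoid M] :
    (∀ (A B : Type u) (actA : A → M → A) (actB : B → M → B),
        IsAct actA → IsAct actB → Nonempty A → Nonempty B →
        (ActFG (fun (p : A × B) (m : M) => (actA p.1 m, actB p.2 m)) ↔
          ActFG actA ∧ ActFG actB)) ↔
      ActFG (DiagAct M) := by
  constructor
  · intro h
    have hMact : IsAct (fun (a m : M) => a * m) := ⟨mul_one, fun a m n => (mul_assoc a m n).symm⟩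
    have hMfg : ActFG (fun (a m : M) => a * m) :=
      ⟨{1}, Set.finite_singleton 1, fun a => ⟨1, rfl, a, one_mul a⟩⟩
    exact (h M M _ _ hMact hMact ⟨1⟩ ⟨1⟩).mpr ⟨hMfg, hMfg⟩
  · rintro ⟨D, hDfin, hDgen⟩ A B actA actB hA hB nA nB
    constructor
    · rintro ⟨U, hUfin, hUgen⟩
      refine ⟨⟨Prod.fst '' U, hUfin.image _, fun a => ?_⟩,
              ⟨Prod.snd '' U, hUfin.image _, fun b => ?_⟩⟩
      · obtain ⟨u, hu, m, hm⟩ := hUgen (a, nB.some)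
        exact ⟨u.1, ⟨u, hu, rfl⟩, m, congrArg Prod.fst hm⟩
      · obtain ⟨u, hu, m, hm⟩ := hUgen (nA.some, b)
        exact ⟨u.2, ⟨u, hu, rfl⟩, m, congrArg Prod.snd hm⟩
    · rintro ⟨⟨UA, hUAfin, hUAgen⟩, ⟨UB, hUBfin, hUBgen⟩⟩
      refine ⟨(fun x : A × B × (M × M) => (actA x.1 x.2.2.1, actB x.2.1 x.2.2.2)) ''
          (UA ×ˢ UB ×ˢ D), ((hUAfin.prod (hUBfin.prod hDfin)).image _), ?_⟩
      rintro ⟨a, b⟩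
      obtain ⟨u, hu, m, hm⟩ := hUAgen a
      obtain ⟨v, hv, n, hn⟩ := hUBgen b
      obtain ⟨⟨s, t⟩, hst, c, hc⟩ := hDgen (m, n)
      have hsc : s * c = m := congrArg Prod.fst hc
      have htc : t * c = n := congrArg Prod.snd hc
      refine ⟨(actA u s, actB v t), ⟨(u, v, (s, t)), ⟨hu, hv, hst⟩, rfl⟩, c, ?_⟩
      show (actA (actA u s) c, actB (actB v t) c) = (a, b)
      rw [← hA.2, ← hB.2, hsc, htc, hm, hn]
end

section
/- Let M be a monoid such that the diagonal M-act is finitely generated, and let A and B be right M-acts. If the direct product M-act A×B is finitely presented, then both A and B are finitely presented. -/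
lemma fp_fst {M : Type*} [Monoid M] (hdiag : ActFG (DiagAct M))
    {A B : Type*} [Nonempty B] (actA : A → M → A) (actB : B → M → B)
    {X : Type} (hX : Finite X) {R : Set ((X × M) × (X × M))} (hR : R.Finite)
    (π : X × M → A × B) (hsurj : Function.Surjective π)
    (heq : ∀ p m, π (FreeAct M X p m) = (actA (π p).1 m, actB (π p).2 m))
    (hker : ∀ w₁ w₂ : X × M, π w₁ = π w₂ ↔ CongGen (FreeAct M X) R w₁ w₂) :
    ActFP M actA := by
  classical
  obtain ⟨U, hUfin, hUgen⟩ := hdiag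
  have : Finite X := hX
  -- choice of preimages
  let wfn : X → X → M × M → X × M :=
    fun x x' u => (hsurj ((π (x, u.1)).1, (π (x', u.2)).2)).choose
  have hw : ∀ x x' u, π (wfn x x' u) = ((π (x, u.1)).1, (π (x', u.2)).2) :=
    fun x x' u => (hsurj _).choose_spec
  let Q : Set ((X × M) × (X × M)) :=
    (fun t : (X × X) × (M × M) => (((t.1.1 : X), t.2.1), wfn t.1.1 t.1.2 t.2)) ''
      (Set.univ ×ˢ U)
  have hQfin : Q.Finite := (Set.finite_univ.prod hUfin).image _
  refine ⟨X, hX, R ∪ Q, hR.union hQfin, fun w => (π w).1, ?_, ?_, ?_⟩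
  · intro a
    obtain ⟨w, hw'⟩ := hsurj (a, Classical.arbitrary B)
    exact ⟨w, by show (π w).1 = a; rw [hw']⟩
  · intro p m
    show (π (FreeAct M X p m)).1 = actA (π p).1 m
    rw [heq]
  · intro w₁ w₂
    show (π w₁).1 = (π w₂).1 ↔ _
    constructor
    · intro hfst
      obtain ⟨u, hu, c, hc⟩ := hUgen (w₁.2, w₂.2)
      have hc1 : u.1 * c = w₁.2 := congrArg Prod.fst hc
      have hc2 : u.2 * c = w₂.2 := congrArg Prod.snd hc
      have e1 : FreeAct M X (w₁.1, u.1) c = w₁ := by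
        simp [FreeAct, hc1]
      have e1' : FreeAct M X (w₂.1, u.2) c = w₂ := by
        simp [FreeAct, hc2]
      have hπ1 : π w₁ = (actA (π (w₁.1, u.1)).1 c, actB (π (w₁.1, u.1)).2 c) := by
        rw [← e1]; exact heq _ _
      have hπ2 : π w₂ = (actA (π (w₂.1, u.2)).1 c, actB (π (w₂.1, u.2)).2 c) := by
        rw [← e1']; exact heq _ _
      have e2 : π (FreeAct M X (wfn w₁.1 w₂.1 u) c) = π w₂ := by
        rw [heq, hw, hπ2]
        have : actA (π (w₁.1, u.1)).1 c = actA (π (w₂.1, u.2)).1 c := by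
          have h1 := congrArg Prod.fst hπ1
          have h2 := congrArg Prod.fst hπ2
          simp only at h1 h2
          rw [← h1, ← h2]; exact hfst
        rw [this]
      have mQ : ((w₁.1, u.1), wfn w₁.1 w₂.1 u) ∈ Q :=
        ⟨((w₁.1, w₂.1), u), ⟨Set.mem_univ _, hu⟩, rfl⟩
      have s3 : CongGen (FreeAct M X) R (FreeAct M X (wfn w₁.1 w₂.1 u) c) w₂ :=
        (hker _ _).1 e2
      intro r hr hcomp hb
      have r1 : r (w₁.1, u.1) (wfn w₁.1 w₂.1 u) := hb _ (Or.inr mQ)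
      have r2 : r w₁ (FreeAct M X (wfn w₁.1 w₂.1 u) c) := by
        rw [← e1]; exact hcomp _ _ c r1
      exact hr.trans r2 (s3 r hr hcomp (fun p hp => hb p (Or.inl hp)))
    · intro hcg
      refine hcg (fun a b => (π a).1 = (π b).1) ⟨fun _ => rfl, Eq.symm, Eq.trans⟩
        ?_ ?_
      · intro a b m hab
        simp only [heq]
        rw [hab]
      · rintro p (hp | hp)
        · have hc : CongGen (FreeAct M X) R p.1 p.2 := fun r _ _ hb => hb p hp
          show (π p.1).1 = (π p.2).1
          rw [(hker _ _).2 hc]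
        · obtain ⟨t, _, rfl⟩ := hp
          show (π (t.1.1, t.2.1)).1 = (π (wfn t.1.1 t.1.2 t.2)).1
          rw [hw]


/-- Let `M` be a monoid whose diagonal act is finitely generated. If the direct product
`M`-act `A × B` is finitely presented, then both `A` and `B` are finitely presented. -/
theorem stmt14 {M : Type*} [Monoid M] (hdiag : ActFG (DiagAct M))
    {A B : Type*} [Nonempty A] [Nonempty B]
    (actA : A → M → A) (actB : B → M → B) (hA : IsAct actA) (hB : IsAct actB)
    (h : ActFP M (fun (p : A × B) (m : M) => (actA p.1 m, actB p.2 m))) :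
    ActFP M actA ∧ ActFP M actB := by
  obtain ⟨X, hX, R, hR, π, hsurj, heq, hker⟩ := h
  constructor
  · exact fp_fst hdiag actA actB hX hR π hsurj heq hker
  · refine fp_fst hdiag actB actA hX hR (Prod.swap ∘ π)
      (Prod.swap_surjective.comp hsurj) ?_ ?_
    · intro p m
      show (π (FreeAct M X p m)).swap = _
      rw [heq]
      rfl
    · intro w₁ w₂
      rw [← hker w₁ w₂]
      exact ⟨fun hh => Prod.swap_injective hh, fun hh => congrArg Prod.swap hh⟩
end

section
/- Let M be a monoid. If the diagonal M-act is finitely generated, then the trivial (one-element) M-act {0} is finitely presented. -/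
/-- If the diagonal `M`-act is finitely generated, then the trivial one-element
`M`-act is finitely presented. -/
theorem stmt15 {M : Type*} [Monoid M] (hdiag : ActFG (DiagAct M)) :
    ActFP M (fun (_ : Unit) (_ : M) => ()) := by
  obtain ⟨U, hUfin, hUgen⟩ := hdiag
  refine ⟨Unit, inferInstance, (fun p : M × M => (((), p.1), ((), p.2))) '' U,
    hUfin.image _, fun _ => (), fun _ => ⟨((), 1), rfl⟩, fun _ _ => rfl,
    fun w₁ w₂ => ?_⟩
  constructor
  · intro _ r hr hcomp hR
    have key : ∀ a b : M, r ((), a) ((), b) := by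
      intro a b
      obtain ⟨u, hu, m, hm⟩ := hUgen (a, b)
      have h1 := hR (((), u.1), ((), u.2)) ⟨u, hu, rfl⟩
      have h2 := hcomp _ _ m h1
      simp only [FreeAct, DiagAct, Prod.mk.injEq] at h2 hm
      rw [hm.1, hm.2] at h2
      exact h2
    obtain ⟨⟨⟩, a⟩ := w₁; obtain ⟨⟨⟩, b⟩ := w₂; exact key a b
  · intro _; rfl
end

section
/- Let M be a monoid. Then M preserves finite presentability in direct products (i.e., for any two right M-acts A and B, the direct product A×B is finitely presented if and only if both A and B are finitely presented) if and only if the diagonal M-act is finitely presented. -/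
universe u

set_option linter.unusedSectionVars false
set_option linter.unusedVariables false

namespace ActAux

variable {M : Type*} [Monoid M]

section CG
variable {A : Type*} {act : A → M → A} {R : Set (A × A)}

theorem cg_refl (a : A) : CongGen act R a a := fun _ hr _ _ => hr.refl a

theorem cg_symm {a b : A} (h : CongGen act R a b) : CongGen act R b a :=
  fun r hr hc hR => hr.symm (h r hr hc hR)

theorem cg_trans {a b c : A} (h : CongGen act R a b) (h' : CongGen act R b c) :
    CongGen act R a c :=
  fun r hr hc hR => hr.trans (h r hr hc hR) (h' r hr hc hR)

theorem cg_compat {a b : A} (m : M) (h : CongGen act R a b) :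
    CongGen act R (act a m) (act b m) :=
  fun r hr hc hR => hc _ _ m (h r hr hc hR)

theorem cg_of_mem {p : A × A} (hp : p ∈ R) : CongGen act R p.1 p.2 :=
  fun _ _ _ hR => hR p hp

theorem cg_equiv : Equivalence (CongGen act R) :=
  ⟨cg_refl, cg_symm, cg_trans⟩

/-- pushforward along an equivariant map -/
theorem cg_push {B : Type*} {actB : B → M → B} {S : Set (B × B)} (f : A → B)
    (hf : ∀ a m, f (act a m) = actB (f a) m)
    (hR : ∀ p ∈ R, CongGen actB S (f p.1) (f p.2)) {a b : A}
    (h : CongGen act R a b) : CongGen actB S (f a) (f b) := by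
  refine h (fun x y => CongGen actB S (f x) (f y)) ⟨fun x => cg_refl _, cg_symm, cg_trans⟩
    (fun x y m hxy => ?_) hR
  show CongGen actB S (f (act x m)) (f (act y m))
  rw [hf, hf]; exact cg_compat m hxy

theorem cg_mono {R' : Set (A × A)} (hRR : R ⊆ R') {a b : A}
    (h : CongGen act R a b) : CongGen act R' a b :=
  cg_push (fun x => x) (fun _ _ => rfl) (fun p hp => cg_of_mem (hRR hp)) h

/-- the kernel of an equivariant map is a congruence; minimality form -/
theorem cg_le_ker {B : Type*} {actB : B → M → B} (f : A → B)
    (hf : ∀ a m, f (act a m) = actB (f a) m)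
    (hR : ∀ p ∈ R, f p.1 = f p.2) {a b : A}
    (h : CongGen act R a b) : f a = f b := by
  refine h (fun x y => f x = f y) ⟨fun _ => rfl, Eq.symm, Eq.trans⟩ (fun x y m hxy => ?_) hR
  show f (act x m) = f (act y m)
  rw [hf, hf]; exact congrArg (fun z => actB z m) hxy

end CG

/-- an auxiliary equivalence-closure inductive -/
inductive EG {A : Type*} (step : A → A → Prop) : A → A → Prop
  | rel {a b} : step a b → EG step a b
  | refl (a) : EG step a a
  | symm {a b} : EG step a b → EG step b a
  | trans {a b c} : EG step a b → EG step b c → EG step a c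

/-- one-step relation from a set of pairs -/
def Step {A : Type*} (act : A → M → A) (R : Set (A × A)) (a b : A) : Prop :=
  ∃ p ∈ R, ∃ m : M, a = act p.1 m ∧ b = act p.2 m

theorem cg_iff_eg {A : Type*} {act : A → M → A} (hact : IsAct act) (R : Set (A × A))
    {a b : A} : CongGen act R a b ↔ EG (Step act R) a b := by
  constructor
  · intro h
    refine h _ ⟨EG.refl, EG.symm, EG.trans⟩ (fun x y m hxy => ?_) (fun p hp => ?_)
    · induction hxy with
      | rel hs =>
        obtain ⟨p, hp, n, hx, hy⟩ := hs
        exact EG.rel ⟨p, hp, n * m, by rw [hx, hact.2], by rw [hy, hact.2]⟩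
      | refl a => exact EG.refl _
      | symm _ ih => exact ih.symm
      | trans _ _ ih₁ ih₂ => exact ih₁.trans ih₂
    · exact EG.rel ⟨p, hp, 1, (hact.1 p.1).symm, (hact.1 p.2).symm⟩
  · intro h
    induction h with
    | rel hs => obtain ⟨p, hp, m, hx, hy⟩ := hs; rw [hx, hy]; exact cg_compat m (cg_of_mem hp)
    | refl a => exact cg_refl a
    | symm _ ih => exact cg_symm ih
    | trans _ _ ih₁ ih₂ => exact cg_trans ih₁ ih₂

theorem free_isAct (X : Type*) : IsAct (FreeAct M X) :=
  ⟨fun a => by simp [FreeAct], fun a m n => by simp [FreeAct, mul_assoc]⟩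



open Function

/-- finite presentability is independent of the finite generating set -/
theorem lemA {A : Type*} {act : A → M → A} (h : ActFP M act)
    {Y : Type} [Finite Y] (ψ : Y × M → A) (hs : Function.Surjective ψ)
    (he : ∀ p m, ψ (FreeAct M Y p m) = act (ψ p) m) :
    ∃ S : Set ((Y × M) × (Y × M)), S.Finite ∧
      ∀ v v', ψ v = ψ v' ↔ CongGen (FreeAct M Y) S v v' := by
  obtain ⟨X, hX, R, hRfin, φ, hφs, hφe, hφk⟩ := h
  set θ : Y × M → X × M := fun v => FreeAct M X (surjInv hφs (ψ (v.1, 1))) v.2 with hθ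
  set θ' : X × M → Y × M := fun w => FreeAct M Y (surjInv hs (φ (w.1, 1))) w.2 with hθ'
  have hφθ : ∀ v, φ (θ v) = ψ v := by
    intro v
    rw [hθ]; simp only [hφe, surjInv_eq]
    rw [← he (v.1, 1) v.2]; simp [FreeAct]
  have hψθ' : ∀ w, ψ (θ' w) = φ w := by
    intro w
    rw [hθ']; simp only [he, surjInv_eq]
    rw [← hφe (w.1, 1) w.2]; simp [FreeAct]
  have hθe : ∀ v m, θ (FreeAct M Y v m) = FreeAct M X (θ v) m := by
    intro v m; simp [hθ, FreeAct, mul_assoc]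
  have hθ'e : ∀ w m, θ' (FreeAct M X w m) = FreeAct M Y (θ' w) m := by
    intro w m; simp [hθ', FreeAct, mul_assoc]
  classical
  refine ⟨(fun p : (X × M) × (X × M) => (θ' p.1, θ' p.2)) '' R ∪
    Set.range (fun y : Y => (((y, 1) : Y × M), θ' (θ (y, 1)))), ?_, ?_⟩
  · exact (hRfin.image _).union (Set.finite_range _)
  intro v v'
  constructor
  · intro hvv'
    have h1 : CongGen (FreeAct M X) R (θ v) (θ v') := by
      rw [← hφk]; rw [hφθ, hφθ, hvv']
    have h2 := cg_push (S := (fun p : (X × M) × (X × M) => (θ' p.1, θ' p.2)) '' R ∪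
        Set.range (fun y : Y => (((y, 1) : Y × M), θ' (θ (y, 1))))) θ' hθ'e
      (fun p hp => cg_of_mem (p := (θ' p.1, θ' p.2)) (Set.mem_union_left _ (Set.mem_image_of_mem _ hp))) h1
    have key : ∀ w : Y × M, CongGen (FreeAct M Y)
        ((fun p : (X × M) × (X × M) => (θ' p.1, θ' p.2)) '' R ∪
          Set.range (fun y : Y => (((y, 1) : Y × M), θ' (θ (y, 1))))) w (θ' (θ w)) := by
      intro w
      have hmem : ((((w.1, 1) : Y × M), θ' (θ (w.1, 1))) :  (Y × M) × (Y × M)) ∈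
          ((fun p : (X × M) × (X × M) => (θ' p.1, θ' p.2)) '' R ∪
            Set.range (fun y : Y => (((y, 1) : Y × M), θ' (θ (y, 1))))) :=
        Set.mem_union_right _ ⟨w.1, rfl⟩
      have := cg_compat (act := FreeAct M Y) w.2 (cg_of_mem hmem)
      have e1 : FreeAct M Y (w.1, 1) w.2 = w := by simp [FreeAct]
      have e2 : FreeAct M Y (θ' (θ (w.1, 1))) w.2 = θ' (θ w) := by
        rw [← hθ'e, ← hθe, e1]
      rwa [e1, e2] at this
    exact cg_trans (key v) (cg_trans h2 (cg_symm (key v')))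
  · intro hcg
    refine cg_le_ker ψ he (fun p hp => ?_) hcg
    rcases hp with ⟨q, hq, rfl⟩ | ⟨y, rfl⟩
    · rw [hψθ', hψθ']; exact (hφk q.1 q.2).mpr (cg_of_mem hq)
    · rw [hψθ', hφθ]

theorem fp_fg {A : Type*} {act : A → M → A} (h : ActFP M act) : ActFG act := by
  obtain ⟨X, hX, R, _, π, hs, he, _⟩ := h
  refine ⟨Set.range (fun x : X => π (x, 1)), Set.finite_range _, fun a => ?_⟩
  obtain ⟨⟨x, m⟩, rfl⟩ := hs a
  refine ⟨π (x, 1), ⟨x, rfl⟩, m, ?_⟩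
  rw [← he (x, 1) m]; simp [FreeAct]

theorem fg_fst {A B : Type*} {actA : A → M → A} {actB : B → M → B}
    (h : ActFG (fun (p : A × B) m => (actA p.1 m, actB p.2 m))) (hB : Nonempty B) :
    ActFG actA := by
  obtain ⟨U, hU, hgen⟩ := h
  refine ⟨Prod.fst '' U, hU.image _, fun a => ?_⟩
  obtain ⟨u, hu, m, hm⟩ := hgen (a, hB.some)
  exact ⟨u.1, ⟨u, hu, rfl⟩, m, congrArg Prod.fst hm⟩

theorem fg_free {A : Type*} {act : A → M → A} (ha : IsAct act) (h : ActFG act) :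
    ∃ (n : ℕ) (f : Fin n → A), (Nonempty A → 0 < n) ∧
      Function.Surjective (fun p : Fin n × M => act (f p.1) p.2) := by
  classical
  obtain ⟨U, hU, hgen⟩ := h
  set l := hU.toFinset.toList with hl
  refine ⟨l.length, fun i => l.get i, fun hA => ?_, fun a => ?_⟩
  · obtain ⟨u, hu, -⟩ := hgen hA.some
    have : u ∈ l := by simp [hl, hU.mem_toFinset, hu]
    exact List.length_pos_iff.mpr (List.ne_nil_of_mem this)
  · obtain ⟨u, hu, m, hm⟩ := hgen a
    have : u ∈ l := by simp [hl, hU.mem_toFinset, hu]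
    obtain ⟨i, hi⟩ := List.mem_iff_get.mp this
    refine ⟨(i, m), ?_⟩
    show act (l.get i) m = a
    rw [hi]; exact hm



theorem fp_congr {A B : Type*} {actA : A → M → A} {actB : B → M → B}
    (e : A → B) (hbij : Function.Bijective e)
    (he : ∀ a m, e (actA a m) = actB (e a) m) (h : ActFP M actA) : ActFP M actB := by
  obtain ⟨X, hX, R, hRfin, π, hπs, hπe, hπk⟩ := h
  refine ⟨X, hX, R, hRfin, fun w => e (π w), hbij.surjective.comp hπs,
    fun p m => by show e (π (FreeAct M X p m)) = actB (e (π p)) m; rw [hπe, he],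
    fun w w' => ?_⟩
  show e (π w) = e (π w') ↔ _
  rw [hbij.injective.eq_iff, hπk]

/-- data extracted from a presentation of the diagonal act -/
theorem diag_data (hD : ActFP M (DiagAct M)) :
    ∃ (W : Type) (_ : Finite W) (pq : W → M × M),
      (∀ s t : M, ∃ (w : W) (m : M), (pq w).1 * m = s ∧ (pq w).2 * m = t) ∧
      ∃ (T : Set ((W × M) × (W × M))), T.Finite ∧
        ∃ δ : W × M → M × M, (∀ w m, δ (w, m) = ((pq w).1 * m, (pq w).2 * m)) ∧
          Function.Surjective δ ∧
          ∀ v v', δ v = δ v' ↔ CongGen (FreeAct M W) T v v' := by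
  obtain ⟨W, hW, T, hTfin, δ, hδs, hδe, hδk⟩ := hD
  refine ⟨W, hW, fun w => δ (w, 1), ?_, T, hTfin, δ, ?_, hδs, hδk⟩
  · intro s t
    obtain ⟨⟨w, m⟩, hw⟩ := hδs (s, t)
    refine ⟨w, m, ?_, ?_⟩
    · have := hδe (w, 1) m
      simp only [FreeAct, one_mul] at this
      rw [this] at hw
      exact congrArg Prod.fst hw
    · have := hδe (w, 1) m
      simp only [FreeAct, one_mul] at this
      rw [this] at hw
      exact congrArg Prod.snd hw
  · intro w m
    have := hδe (w, 1) m
    simp only [FreeAct, one_mul] at this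
    rw [this]; rfl

/-- product of two finitely generated free acts is finitely presented,
given that the diagonal act is -/
theorem lemP (hD : ActFP M (DiagAct M)) (X Y : Type) [Finite X] [Finite Y] :
    ActFP M (fun (c : (X × M) × (Y × M)) (m : M) =>
      (FreeAct M X c.1 m, FreeAct M Y c.2 m)) := by
  obtain ⟨W, hW, T, hTfin, δ, hδs, hδe, hδk⟩ := hD
  classical
  set Z := X × Y × W with hZ
  set Pm : Z × M → (X × M) × (Y × M) :=
    fun z => ((z.1.1, (δ (z.1.2.2, z.2)).1), (z.1.2.1, (δ (z.1.2.2, z.2)).2)) with hPm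
  set emb : X → Y → W × M → Z × M := fun x y p => ((x, y, p.1), p.2) with hemb
  set T' : Set ((Z × M) × (Z × M)) :=
    (fun q : (X × Y) × ((W × M) × (W × M)) =>
      (emb q.1.1 q.1.2 q.2.1, emb q.1.1 q.1.2 q.2.2)) '' (Set.univ ×ˢ T) with hT'
  have hδe' : ∀ (w : W) (m n : M), δ (w, m * n) = DiagAct M (δ (w, m)) n := fun w m n =>
    hδe (w, m) n
  have hPme : ∀ p m, Pm (FreeAct M Z p m) =
      (fun (c : (X × M) × (Y × M)) (m : M) => (FreeAct M X c.1 m, FreeAct M Y c.2 m))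
        (Pm p) m := by
    rintro ⟨⟨x, y, w⟩, m⟩ n
    simp only [hPm, FreeAct, hδe']
    rfl
  refine ⟨Z, inferInstance, T', (Set.finite_univ.prod hTfin).image _, Pm, ?_, hPme, ?_⟩
  · rintro ⟨⟨x, s⟩, ⟨y, t⟩⟩
    obtain ⟨⟨w, m⟩, hw⟩ := hδs (s, t)
    exact ⟨((x, y, w), m), by simp [hPm, hw]⟩
  · rintro ⟨⟨x, y, w⟩, m⟩ ⟨⟨x', y', w'⟩, m'⟩
    constructor
    · intro hp
      simp only [hPm, Prod.mk.injEq] at hp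
      obtain ⟨⟨hx, h1⟩, hy, h2⟩ := hp
      have hδeq : δ (w, m) = δ (w', m') := Prod.ext h1 h2
      have hcg : CongGen (FreeAct M W) T (w, m) (w', m') := (hδk _ _).mp hδeq
      subst hx; subst hy
      have := cg_push (actB := FreeAct M Z) (S := T') (emb x y)
        (fun p n => by simp [hemb, FreeAct])
        (fun p hp => cg_of_mem (p := (emb x y p.1, emb x y p.2))
          ⟨((x, y), p), ⟨Set.mem_univ _, hp⟩, rfl⟩) hcg
      exact this
    · intro hcg
      refine cg_le_ker (actB := fun (c : (X × M) × (Y × M)) (m : M) =>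
        (FreeAct M X c.1 m, FreeAct M Y c.2 m)) Pm hPme (fun p hp => ?_) hcg
      obtain ⟨⟨⟨xx, yy⟩, ⟨p1, p2⟩⟩, ⟨-, hpt⟩, rfl⟩ := hp
      have hδeq : δ p1 = δ p2 := (hδk _ _).mpr (cg_of_mem hpt)
      simp only [hPm, hemb]
      rw [show (p1.1, p1.2) = p1 from rfl] at *
      simp [hδeq]

/-- quotient of a finitely presented act by a finitely generated congruence
is finitely presented -/
theorem lemQ {C A : Type*} {actC : C → M → C} {actA : A → M → A}
    (hC : ActFP M actC) {G : Set (C × C)} (hG : G.Finite)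
    (q : C → A) (hqs : Function.Surjective q)
    (hqe : ∀ c m, q (actC c m) = actA (q c) m)
    (hker : ∀ c c', q c = q c' ↔ CongGen actC G c c') : ActFP M actA := by
  obtain ⟨X, hX, R, hRfin, π, hπs, hπe, hπk⟩ := hC
  classical
  set sec : C → X × M := surjInv hπs with hsec
  set G' : Set ((X × M) × (X × M)) := (fun g : C × C => (sec g.1, sec g.2)) '' G with hG'
  have hsecπ : ∀ c, π (sec c) = c := fun c => surjInv_eq hπs c
  refine ⟨X, hX, R ∪ G', hRfin.union (hG.image _), fun w => q (π w),
    fun a => ?_,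
    fun p m => by show q (π (FreeAct M X p m)) = actA (q (π p)) m; rw [hπe, hqe],
    fun w w' => ?_⟩
  · obtain ⟨c, rfl⟩ := hqs a
    exact ⟨sec c, by show q (π (sec c)) = q c; rw [hsecπ]⟩
  constructor
  · intro hww'
    have hcg : CongGen actC G (π w) (π w') := (hker _ _).mp hww'
    have hr := hcg (fun c c' => ∀ v v', π v = c → π v' = c' →
        CongGen (FreeAct M X) (R ∪ G') v v') ?_ ?_ ?_
    · exact hr w w' rfl rfl
    · constructor
      · intro c v v' h1 h2
        exact cg_mono Set.subset_union_left ((hπk _ _).mp (h1.trans h2.symm))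
      · intro c c' h v v' h1 h2
        exact cg_symm (h v' v h2 h1)
      · intro c c' c'' h h' v v'' h1 h2
        exact cg_trans (h v (sec c') h1 (hsecπ _)) (h' (sec c') v'' (hsecπ _) h2)
    · intro c c' m h v v' h1 h2
      have e1 : π (FreeAct M X (sec c) m) = actC c m := by rw [hπe, hsecπ]
      have e2 : π (FreeAct M X (sec c') m) = actC c' m := by rw [hπe, hsecπ]
      have k1 : CongGen (FreeAct M X) (R ∪ G') v (FreeAct M X (sec c) m) :=
        cg_mono Set.subset_union_left ((hπk _ _).mp (h1.trans e1.symm))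
      have k2 : CongGen (FreeAct M X) (R ∪ G') (FreeAct M X (sec c') m) v' :=
        cg_mono Set.subset_union_left ((hπk _ _).mp (e2.trans h2.symm))
      have kmid := cg_compat (act := FreeAct M X) m (h (sec c) (sec c') (hsecπ _) (hsecπ _))
      exact cg_trans k1 (cg_trans kmid k2)
    · intro p hp v v' h1 h2
      have k1 : CongGen (FreeAct M X) (R ∪ G') v (sec p.1) :=
        cg_mono Set.subset_union_left ((hπk _ _).mp (h1.trans (hsecπ _).symm))
      have k2 : CongGen (FreeAct M X) (R ∪ G') (sec p.2) v' :=
        cg_mono Set.subset_union_left ((hπk _ _).mp ((hsecπ _).trans h2.symm))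
      have kmid : CongGen (FreeAct M X) (R ∪ G') (sec p.1) (sec p.2) :=
        cg_of_mem (p := (sec p.1, sec p.2))
          (Set.mem_union_right _ (Set.mem_image_of_mem _ hp))
      exact cg_trans k1 (cg_trans kmid k2)
  · intro hcg
    refine cg_le_ker (fun w => q (π w))
      (fun p m => by show q (π (FreeAct M X p m)) = actA (q (π p)) m; rw [hπe, hqe])
      (fun p hp => ?_) hcg
    rcases hp with hp | ⟨g, hg, rfl⟩
    · exact congrArg q ((hπk _ _).mpr (cg_of_mem hp))
    · show q (π (sec g.1)) = q (π (sec g.2))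
      rw [hsecπ, hsecπ]
      exact (hker _ _).mpr (cg_of_mem hg)



theorem fg_snd {A B : Type*} {actA : A → M → A} {actB : B → M → B}
    (h : ActFG (fun (p : A × B) m => (actA p.1 m, actB p.2 m))) (hA : Nonempty A) :
    ActFG actB := by
  obtain ⟨U, hU, hgen⟩ := h
  refine ⟨Prod.snd '' U, hU.image _, fun b => ?_⟩
  obtain ⟨u, hu, m, hm⟩ := hgen (hA.some, b)
  exact ⟨u.2, ⟨u, hu, rfl⟩, m, congrArg Prod.snd hm⟩

/-- direction (1): products of f.p. acts are f.p. when the diagonal act is f.p. -/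
theorem prod_fp {A B : Type*} {actA : A → M → A} {actB : B → M → B}
    (hD : ActFP M (DiagAct M)) (hA : ActFP M actA) (hB : ActFP M actB) :
    ActFP M (fun (p : A × B) (m : M) => (actA p.1 m, actB p.2 m)) := by
  obtain ⟨X, hX, R, hRfin, φ, hφs, hφe, hφk⟩ := hA
  obtain ⟨Y, hY, S, hSfin, ψ, hψs, hψe, hψk⟩ := hB
  obtain ⟨W, hW, pq, hgen, -⟩ := diag_data hD
  classical
  set actC := fun (c : (X × M) × (Y × M)) (m : M) =>
    (FreeAct M X c.1 m, FreeAct M Y c.2 m) with hactC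
  have hC : ActFP M actC := lemP hD X Y
  set q : (X × M) × (Y × M) → A × B := fun c => (φ c.1, ψ c.2) with hq
  have hqs : Function.Surjective q := by
    rintro ⟨a, b⟩
    obtain ⟨u, rfl⟩ := hφs a
    obtain ⟨v, rfl⟩ := hψs b
    exact ⟨(u, v), rfl⟩
  have hqe : ∀ c m, q (actC c m) = (fun (p : A × B) (m : M) =>
      (actA p.1 m, actB p.2 m)) (q c) m := by
    intro c m
    show (φ (FreeAct M X c.1 m), ψ (FreeAct M Y c.2 m)) = _
    rw [hφe, hψe]
  set GR : Set ((((X × M) × (Y × M))) × (((X × M) × (Y × M)))) :=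
    (fun t : (((X × M) × (X × M)) × Y × W) =>
      (((t.1.1.1, t.1.1.2 * (pq t.2.2).1), (t.2.1, (pq t.2.2).2)),
       ((t.1.2.1, t.1.2.2 * (pq t.2.2).1), (t.2.1, (pq t.2.2).2)))) '' (R ×ˢ Set.univ)
    with hGR
  set GS : Set ((((X × M) × (Y × M))) × (((X × M) × (Y × M)))) :=
    (fun t : (((Y × M) × (Y × M)) × X × W) =>
      (((t.2.1, (pq t.2.2).1), (t.1.1.1, t.1.1.2 * (pq t.2.2).2)),
       ((t.2.1, (pq t.2.2).1), (t.1.2.1, t.1.2.2 * (pq t.2.2).2)))) '' (S ×ˢ Set.univ)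
    with hGS
  have hGfin : (GR ∪ GS).Finite :=
    ((hRfin.prod Set.finite_univ).image _).union ((hSfin.prod Set.finite_univ).image _)
  have CL1 : ∀ (u u' : X × M) (v : Y × M), φ u = φ u' →
      CongGen actC (GR ∪ GS) (u, v) (u', v) := by
    intro u u' v huu
    have hcg : CongGen (FreeAct M X) R u u' := (hφk _ _).mp huu
    have heg := (cg_iff_eg (free_isAct X) R).mp hcg
    clear hcg huu
    induction heg with
    | rel hs =>
      obtain ⟨r, hr, k, rfl, rfl⟩ := hs
      obtain ⟨y, t⟩ := v
      obtain ⟨w, n, h1, h2⟩ := hgen k t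
      have hmem : ((((r.1.1, r.1.2 * (pq w).1), (y, (pq w).2)),
          ((r.2.1, r.2.2 * (pq w).1), (y, (pq w).2))) :
            (((X × M) × (Y × M))) × (((X × M) × (Y × M)))) ∈ GR ∪ GS :=
        Set.mem_union_left _ ⟨(r, y, w), ⟨hr, Set.mem_univ _⟩, rfl⟩
      have := cg_compat (act := actC) n (cg_of_mem hmem)
      have e1 : actC ((r.1.1, r.1.2 * (pq w).1), (y, (pq w).2)) n =
          (FreeAct M X r.1 k, (y, t)) := by
        show ((r.1.1, r.1.2 * (pq w).1 * n), (y, (pq w).2 * n)) = _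
        rw [mul_assoc, h1, h2]; rfl
      have e2 : actC ((r.2.1, r.2.2 * (pq w).1), (y, (pq w).2)) n =
          (FreeAct M X r.2 k, (y, t)) := by
        show ((r.2.1, r.2.2 * (pq w).1 * n), (y, (pq w).2 * n)) = _
        rw [mul_assoc, h1, h2]; rfl
      rwa [e1, e2] at this
    | refl a => exact cg_refl _
    | symm _ ih => exact cg_symm ih
    | trans _ _ ih₁ ih₂ => exact cg_trans ih₁ ih₂
  have CL2 : ∀ (v v' : Y × M) (u : X × M), ψ v = ψ v' →
      CongGen actC (GR ∪ GS) (u, v) (u, v') := by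
    intro v v' u hvv
    have hcg : CongGen (FreeAct M Y) S v v' := (hψk _ _).mp hvv
    have heg := (cg_iff_eg (free_isAct Y) S).mp hcg
    clear hcg hvv
    induction heg with
    | rel hs =>
      obtain ⟨r, hr, k, rfl, rfl⟩ := hs
      obtain ⟨x, s⟩ := u
      obtain ⟨w, n, h1, h2⟩ := hgen s k
      have hmem : ((((x, (pq w).1), (r.1.1, r.1.2 * (pq w).2)),
          ((x, (pq w).1), (r.2.1, r.2.2 * (pq w).2))) :
            (((X × M) × (Y × M))) × (((X × M) × (Y × M)))) ∈ GR ∪ GS :=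
        Set.mem_union_right _ ⟨(r, x, w), ⟨hr, Set.mem_univ _⟩, rfl⟩
      have := cg_compat (act := actC) n (cg_of_mem hmem)
      have e1 : actC ((x, (pq w).1), (r.1.1, r.1.2 * (pq w).2)) n =
          ((x, s), FreeAct M Y r.1 k) := by
        show ((x, (pq w).1 * n), (r.1.1, r.1.2 * (pq w).2 * n)) = _
        rw [mul_assoc, h1, h2]; rfl
      have e2 : actC ((x, (pq w).1), (r.2.1, r.2.2 * (pq w).2)) n =
          ((x, s), FreeAct M Y r.2 k) := by
        show ((x, (pq w).1 * n), (r.2.1, r.2.2 * (pq w).2 * n)) = _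
        rw [mul_assoc, h1, h2]; rfl
      rwa [e1, e2] at this
    | refl a => exact cg_refl _
    | symm _ ih => exact cg_symm ih
    | trans _ _ ih₁ ih₂ => exact cg_trans ih₁ ih₂
  have hker : ∀ c c', q c = q c' ↔ CongGen actC (GR ∪ GS) c c' := by
    intro c c'
    constructor
    · intro hcc
      have h1 : φ c.1 = φ c'.1 := congrArg Prod.fst hcc
      have h2 : ψ c.2 = ψ c'.2 := congrArg Prod.snd hcc
      exact cg_trans (CL1 c.1 c'.1 c.2 h1) (CL2 c.2 c'.2 c'.1 h2)
    · intro hcg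
      refine cg_le_ker (actB := fun (p : A × B) (m : M) => (actA p.1 m, actB p.2 m))
        q hqe (fun p hp => ?_) hcg
      rcases hp with ⟨t, ⟨ht, -⟩, rfl⟩ | ⟨t, ⟨ht, -⟩, rfl⟩
      · have hφt : φ t.1.1 = φ t.1.2 := (hφk _ _).mpr (cg_of_mem ht)
        show (φ (t.1.1.1, t.1.1.2 * (pq t.2.2).1), _) =
          (φ (t.1.2.1, t.1.2.2 * (pq t.2.2).1), _)
        have g1 : φ (t.1.1.1, t.1.1.2 * (pq t.2.2).1) =
            actA (φ t.1.1) (pq t.2.2).1 := hφe t.1.1 (pq t.2.2).1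
        have g2 : φ (t.1.2.1, t.1.2.2 * (pq t.2.2).1) =
            actA (φ t.1.2) (pq t.2.2).1 := hφe t.1.2 (pq t.2.2).1
        rw [g1, g2, hφt]
      · have hψt : ψ t.1.1 = ψ t.1.2 := (hψk _ _).mpr (cg_of_mem ht)
        show (_, ψ (t.1.1.1, t.1.1.2 * (pq t.2.2).2)) =
          (_, ψ (t.1.2.1, t.1.2.2 * (pq t.2.2).2))
        have g1 : ψ (t.1.1.1, t.1.1.2 * (pq t.2.2).2) =
            actB (ψ t.1.1) (pq t.2.2).2 := hψe t.1.1 (pq t.2.2).2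
        have g2 : ψ (t.1.2.1, t.1.2.2 * (pq t.2.2).2) =
            actB (ψ t.1.2) (pq t.2.2).2 := hψe t.1.2 (pq t.2.2).2
        rw [g1, g2, hψt]
  exact lemQ hC hGfin q hqs hqe hker



/-- direction (2): a factor of a f.p. direct product is f.p., given diagonal f.p. -/
theorem proj_fp {A B : Type*} {actA : A → M → A} {actB : B → M → B}
    (hD : ActFP M (DiagAct M)) (hIA : IsAct actA) (hIB : IsAct actB)
    (hNA : Nonempty A) (hNB : Nonempty B)
    (hAB : ActFP M (fun (p : A × B) (m : M) => (actA p.1 m, actB p.2 m))) :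
    ActFP M actA := by
  classical
  obtain ⟨W, hW, pq, hgen, -⟩ := diag_data hD
  obtain ⟨n, f, -, hφs⟩ := fg_free hIA (fg_fst (fp_fg hAB) hNB)
  obtain ⟨k, g, hkpos, hψs⟩ := fg_free hIB (fg_snd (fp_fg hAB) hNA)
  have hk : 0 < k := hkpos hNB
  set φ : Fin n × M → A := fun p => actA (f p.1) p.2 with hφ
  set ψ : Fin k × M → B := fun p => actB (g p.1) p.2 with hψ
  have hφe : ∀ p m, φ (FreeAct M (Fin n) p m) = actA (φ p) m := by
    intro p m; show actA (f p.1) (p.2 * m) = actA (actA (f p.1) p.2) m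
    exact hIA.2 _ _ _
  have hψe : ∀ p m, ψ (FreeAct M (Fin k) p m) = actB (ψ p) m := by
    intro p m; show actB (g p.1) (p.2 * m) = actB (actB (g p.1) p.2) m
    exact hIB.2 _ _ _
  set Z := Fin n × Fin k × W with hZ
  set C := (Fin n × M) × (Fin k × M) with hCdef
  set Pm : Z × M → C :=
    fun z => ((z.1.1, (pq z.1.2.2).1 * z.2), (z.1.2.1, (pq z.1.2.2).2 * z.2)) with hPm
  have hPms : Function.Surjective Pm := by
    rintro ⟨⟨x, s⟩, ⟨y, t⟩⟩
    obtain ⟨w, m, h1, h2⟩ := hgen s t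
    exact ⟨((x, y, w), m), by simp [hPm, h1, h2]⟩
  set θ : C → A × B := fun c => (φ c.1, ψ c.2) with hθ
  have hθPe : ∀ (z : Z × M) (m : M), θ (Pm (FreeAct M Z z m)) =
      (fun (p : A × B) (m : M) => (actA p.1 m, actB p.2 m)) (θ (Pm z)) m := by
    rintro ⟨⟨x, y, w⟩, m0⟩ m
    show (φ (x, (pq w).1 * (m0 * m)), ψ (y, (pq w).2 * (m0 * m))) =
      (actA (φ (x, (pq w).1 * m0)) m, actB (ψ (y, (pq w).2 * m0)) m)
    rw [← mul_assoc, ← mul_assoc]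
    exact Prod.ext (hφe (x, (pq w).1 * m0) m) (hψe (y, (pq w).2 * m0) m)
  have hθPs : Function.Surjective (fun z => θ (Pm z)) := by
    rintro ⟨a, b⟩
    obtain ⟨u, rfl⟩ := hφs a
    obtain ⟨v, rfl⟩ := hψs b
    obtain ⟨z, hz⟩ := hPms (u, v)
    exact ⟨z, show θ (Pm z) = (φ u, ψ v) by rw [hz]⟩
  obtain ⟨R', hR'fin, hR'k⟩ := lemA hAB (fun z => θ (Pm z)) hθPs hθPe
  set Ge : Set ((Fin n × M) × (Fin n × M)) :=
    (fun p : (Z × M) × (Z × M) => ((Pm p.1).1, (Pm p.2).1)) '' R' with hGe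
  have e_equiv : ∀ (z : Z × M) (m : M),
      (Pm (FreeAct M Z z m)).1 = FreeAct M (Fin n) (Pm z).1 m := by
    rintro ⟨⟨x, y, w⟩, m0⟩ m
    show (x, (pq w).1 * (m0 * m)) = (x, (pq w).1 * m0 * m)
    rw [mul_assoc]
  refine ⟨Fin n, inferInstance, Ge, hR'fin.image _, φ, hφs, hφe, fun u u' => ?_⟩
  constructor
  · intro huu
    set v : Fin k × M := ((⟨0, hk⟩ : Fin k), 1) with hv
    obtain ⟨z, hz⟩ := hPms (u, v)
    obtain ⟨z', hz'⟩ := hPms (u', v)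
    have hθeq : θ (Pm z) = θ (Pm z') := by
      rw [hz, hz']
      exact Prod.ext huu rfl
    have hcg : CongGen (FreeAct M Z) R' z z' := (hR'k _ _).mp hθeq
    have := cg_push (actB := FreeAct M (Fin n)) (S := Ge) (fun z => (Pm z).1)
      e_equiv
      (fun p hp => cg_of_mem (p := ((Pm p.1).1, (Pm p.2).1))
        (Set.mem_image_of_mem _ hp)) hcg
    change CongGen (FreeAct M (Fin n)) Ge (Pm z).1 (Pm z').1 at this
    rwa [hz, hz'] at this
  · intro hcg
    refine cg_le_ker φ hφe (fun p hp => ?_) hcg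
    obtain ⟨r, hr, rfl⟩ := hp
    have : θ (Pm r.1) = θ (Pm r.2) := (hR'k _ _).mpr (cg_of_mem hr)
    exact congrArg Prod.fst this



theorem M_self_fp : ActFP M (fun (a : M) (m : M) => a * m) := by
  refine ⟨Unit, inferInstance, ∅, Set.finite_empty, fun p => p.2, fun a => ⟨((), a), rfl⟩,
    fun p m => rfl, fun w w' => ?_⟩
  obtain ⟨⟨⟩, m1⟩ := w
  obtain ⟨⟨⟩, m2⟩ := w'
  constructor
  · intro h
    have hm : m1 = m2 := h
    rw [hm]; exact cg_refl _
  · intro h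
    exact h (fun a b => a.2 = b.2) ⟨fun _ => rfl, Eq.symm, Eq.trans⟩
      (fun x y m hxy => by show x.2 * m = y.2 * m; rw [hxy])
      (fun p hp => absurd hp (Set.notMem_empty p))

end ActAux

open ActAux

/-- A monoid `M` preserves finite presentability in direct products (for any two
`M`-acts `A` and `B`, the direct product `A × B` is finitely presented iff both `A`
and `B` are) if and only if the diagonal `M`-act is finitely presented. -/
theorem stmt16 {M : Type u} [Monoid M] :
    (∀ (A B : Type u) (actA : A → M → A) (actB : B → M → B),
        IsAct actA → IsAct actB → Nonempty A → Nonempty B →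
        (ActFP M (fun (p : A × B) (m : M) => (actA p.1 m, actB p.2 m)) ↔
          ActFP M actA ∧ ActFP M actB)) ↔
      ActFP M (DiagAct M) := by
  constructor
  · intro h
    have hiff := h M M (fun a m => a * m) (fun a m => a * m)
      ⟨mul_one, fun a m n => (mul_assoc a m n).symm⟩
      ⟨mul_one, fun a m n => (mul_assoc a m n).symm⟩ ⟨1⟩ ⟨1⟩
    exact hiff.mpr ⟨M_self_fp, M_self_fp⟩
  · intro hD A B actA actB hIA hIB hNA hNB
    refine ⟨fun hAB => ⟨proj_fp hD hIA hIB hNA hNB hAB, ?_⟩, fun hp => prod_fp hD hp.1 hp.2⟩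
    exact proj_fp hD hIB hIA hNB hNA
      (fp_congr (⇑(Equiv.prodComm A B)) (Equiv.prodComm A B).bijective
        (fun a m => rfl) hAB)
end

section
/- Let M and N be monoids, let A be a right M-act, and let B be a right N-act. Then the wreath product A≀B is a finitely generated 𝒲(M,N|A)-act if and only if A is a finitely generated M-act and B is a finitely generated N-act. -/
/-- The action of the wreath product monoid `𝒲(M, N | A)` (carried on `M × (A → N)`)
on the wreath product `A ≀ B` (carried on `A × B`): `(a, b)(m, θ) = (a m, b (a θ))`. -/
def WreathAct {M N A B : Type*} (actA : A → M → A) (actB : B → N → B) :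
    A × B → M × (A → N) → A × B :=
  fun p w => (actA p.1 w.1, actB p.2 (w.2 p.1))

/-- The wreath product `A ≀ B` is a finitely generated `𝒲(M, N | A)`-act if and only if
`A` is a finitely generated `M`-act and `B` is a finitely generated `N`-act. -/
theorem stmt17 {M N A B : Type*} [Monoid M] [Monoid N] [Nonempty A] [Nonempty B]
    (actA : A → M → A) (actB : B → N → B) (hA : IsAct actA) (hB : IsAct actB) :
    ActFG (WreathAct actA actB) ↔ ActFG actA ∧ ActFG actB := by
  constructor
  · rintro ⟨U, hUfin, hUgen⟩
    constructor
    · refine ⟨Prod.fst '' U, hUfin.image _, fun a => ?_⟩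
      obtain ⟨u, hu, ⟨m, θ⟩, hm⟩ := hUgen (a, Classical.arbitrary B)
      exact ⟨u.1, ⟨u, hu, rfl⟩, m, congrArg Prod.fst hm⟩
    · refine ⟨Prod.snd '' U, hUfin.image _, fun b => ?_⟩
      obtain ⟨u, hu, ⟨m, θ⟩, hm⟩ := hUgen (Classical.arbitrary A, b)
      exact ⟨u.2, ⟨u, hu, rfl⟩, θ u.1, congrArg Prod.snd hm⟩
  · rintro ⟨⟨U, hUfin, hUgen⟩, ⟨V, hVfin, hVgen⟩⟩
    refine ⟨U ×ˢ V, hUfin.prod hVfin, fun ⟨a, b⟩ => ?_⟩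
    obtain ⟨u, hu, m, hm⟩ := hUgen a
    obtain ⟨v, hv, n, hn⟩ := hVgen b
    exact ⟨(u, v), Set.mk_mem_prod hu hv, (m, fun _ => n), by
      simp [WreathAct, hm, hn]⟩
end
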